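/- arXiv:1107.5228 — 12 statements merged into one kernel-verified Lean document; each statement's English description precedes it below -/
import Mathlib

section
/- A function H : A^ℤ → A^ℤ (with A a finite alphabet and A^ℤ given the Cantor/prodiscrete topology) is the global map of a non-uniform cellular automaton (i.e., there exist radii r_i and local rules h_i : A^{2r_i+1} → A such that H(x)_i = h_i(x_{i-r_i},…,x_{i+r_i}) for all x and i) if and only if H is continuous. -/
lemma exists_finset_determines {A : Type} [Fintype A]
    [TopologicalSpace A] [DiscreteTopology A]
    (f : (ℤ → A) → A) (hf : Continuous f) :
    ∃ S : Finset ℤ, ∀ x y : ℤ → A, (∀ i ∈ S, x i = y i) → f x = f y := by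
  have hloc : ∀ x : ℤ → A, ∃ I : Finset ℤ,
      ∀ y : ℤ → A, (∀ i ∈ I, y i = x i) → f y = f x := by
    intro x
    have hmem : f ⁻¹' {f x} ∈ nhds x :=
      (hf.isOpen_preimage _ (isOpen_discrete _)).mem_nhds rfl
    rw [nhds_pi, Filter.mem_pi] at hmem
    obtain ⟨I, hIfin, t, ht, hsub⟩ := hmem
    refine ⟨hIfin.toFinset, fun y hy => ?_⟩
    have hy' : y ∈ I.pi t := by
      intro i hi
      rw [hy i (hIfin.mem_toFinset.mpr hi)]
      exact mem_of_mem_nhds (ht i)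
    exact hsub hy'
  choose I hI using hloc
  have hUopen : ∀ x : ℤ → A, IsOpen {y : ℤ → A | ∀ i ∈ I x, y i = x i} := by
    intro x
    have heq : {y : ℤ → A | ∀ i ∈ I x, y i = x i}
        = ⋂ i ∈ I x, (fun y : ℤ → A => y i) ⁻¹' {x i} := by
      ext y; simp
    rw [heq]
    exact isOpen_biInter_finset fun i _ =>
      (continuous_apply i).isOpen_preimage _ (isOpen_discrete _)
  obtain ⟨T, hT⟩ := isCompact_univ.elim_nhds_subcover
    (fun x => {y : ℤ → A | ∀ i ∈ I x, y i = x i})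
    (fun x _ => (hUopen x).mem_nhds (fun i _ => rfl))
  refine ⟨T.biUnion I, fun x y hxy => ?_⟩
  have hx : x ∈ ⋃ z ∈ T, {y : ℤ → A | ∀ i ∈ I z, y i = z i} := hT.2 (Set.mem_univ x)
  simp only [Set.mem_iUnion, Set.mem_setOf_eq] at hx
  obtain ⟨z, hzT, hxz⟩ := hx
  have hyz : ∀ i ∈ I z, y i = z i := fun i hi => by
    rw [← hxy i (Finset.mem_biUnion.mpr ⟨z, hzT, hi⟩)]
    exact hxz i hi
  rw [hI z x hxz, hI z y hyz]

/-- A function `H : A^ℤ → A^ℤ` (A a finite alphabet, `A^ℤ` with the prodiscrete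
topology) is the global map of a non-uniform cellular automaton iff it is continuous. -/
theorem stmt_0 {A : Type} [Fintype A] [Nonempty A]
    [TopologicalSpace A] [DiscreteTopology A]
    (H : (ℤ → A) → (ℤ → A)) :
    (∃ (r : ℤ → ℕ) (h : ∀ i : ℤ, (Fin (2 * r i + 1) → A) → A),
      ∀ (x : ℤ → A) (i : ℤ),
        H x i = h i (fun j => x (i - (r i : ℤ) + ((j : ℕ) : ℤ)))) ↔
    Continuous H := by
  constructor
  · rintro ⟨r, h, hH⟩
    rw [continuous_pi_iff]
    intro i
    have heq : (fun x => H x i) = (fun u : Fin (2 * r i + 1) → A => h i u) ∘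
        (fun x : ℤ → A => fun j : Fin (2 * r i + 1) => x (i - (r i : ℤ) + ((j : ℕ) : ℤ))) := by
      funext x; exact hH x i
    rw [heq]
    exact continuous_of_discreteTopology.comp
      (continuous_pi fun j => continuous_apply _)
  · intro hH
    have key := fun i : ℤ => exists_finset_determines (fun x => H x i)
      ((continuous_apply i).comp hH)
    choose S hS using key
    set r : ℤ → ℕ := fun i => (S i).sup (fun s => (s - i).natAbs) with hr
    refine ⟨r, fun i u => H (fun k =>
      if hk : 0 ≤ k - (i - (r i : ℤ)) ∧ (k - (i - (r i : ℤ))).toNat < 2 * r i + 1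
      then u ⟨(k - (i - (r i : ℤ))).toNat, hk.2⟩ else Classical.arbitrary A) i,
      fun x i => ?_⟩
    apply hS i
    intro s hs
    have hb : (s - i).natAbs ≤ r i := Finset.le_sup (f := fun s => (s - i).natAbs) hs
    have h1 : 0 ≤ s - (i - (r i : ℤ)) := by omega
    have h2 : (s - (i - (r i : ℤ))).toNat < 2 * r i + 1 := by omega
    simp only [dif_pos (And.intro h1 h2)]
    congr 1
    omega
end

section
/- Every r-ν-CA H : A^ℤ → A^ℤ of radius r on a finite alphabet A is a subsystem of a cellular automaton: there exist a finite alphabet B, a CA global map F : B^ℤ → B^ℤ, and a continuous injection φ : A^ℤ → B^ℤ such that φ ∘ H = F ∘ φ. (One may take B = A × {1,…,n} where n is the number of functions A^{2r+1} → A.) -/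
/-- Every r-ν-CA `H : A^ℤ → A^ℤ` of radius `r` on a finite alphabet is a subsystem of a
cellular automaton: with `B = A × ({rules A^{2r+1} → A})` finite, there are a CA global
map `F : B^ℤ → B^ℤ` (induced by a single local rule of radius `r`) and a continuous
injection `φ : A^ℤ → B^ℤ` with `φ ∘ H = F ∘ φ`. -/
theorem stmt_2 {A : Type} [Fintype A] [DecidableEq A] [Nonempty A]
    [TopologicalSpace A] [DiscreteTopology A]
    (r : ℕ)
    (h : ℤ → (Fin (2 * r + 1) → A) → A)
    (H : (ℤ → A) → (ℤ → A))
    (hH : ∀ (x : ℤ → A) (i : ℤ),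
      H x i = h i (fun j => x (i - (r : ℤ) + ((j : ℕ) : ℤ)))) :
    ∃ (f : (Fin (2 * r + 1) → A × ((Fin (2 * r + 1) → A) → A)) →
            A × ((Fin (2 * r + 1) → A) → A))
      (F : (ℤ → A × ((Fin (2 * r + 1) → A) → A)) →
            (ℤ → A × ((Fin (2 * r + 1) → A) → A)))
      (φ : (ℤ → A) → (ℤ → A × ((Fin (2 * r + 1) → A) → A))),
      (∀ (y : ℤ → A × ((Fin (2 * r + 1) → A) → A)) (i : ℤ),
        F y i = f (fun j => y (i - (r : ℤ) + ((j : ℕ) : ℤ)))) ∧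
      Continuous φ ∧ Function.Injective φ ∧
      φ ∘ H = F ∘ φ := by
  set c : Fin (2 * r + 1) := ⟨r, by omega⟩ with hc
  refine ⟨fun w => ((w c).2 (fun j => (w j).1), (w c).2),
    fun y i => (( y (i - (r : ℤ) + ((c : ℕ) : ℤ))).2
        (fun j => (y (i - (r : ℤ) + ((j : ℕ) : ℤ))).1),
      (y (i - (r : ℤ) + ((c : ℕ) : ℤ))).2),
    fun x i => (x i, h i), fun y i => rfl, ?_, ?_, ?_⟩
  · refine continuous_pi fun i => Continuous.prodMk ?_ continuous_const
    exact continuous_apply i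
  · intro x y hxy
    funext i
    exact congrArg Prod.fst (congrFun hxy i)
  · funext x i
    have hcen : i - (r : ℤ) + ((c : ℕ) : ℤ) = i := by simp [hc]
    simp only [Function.comp_apply, hcen, hH]
end

section
/- Let A = {0,1} and define H : A^ℤ → A^ℤ by H(x)_0 = 0 and H(x)_i = x_{i-1} XOR x_{i+1} for i ≠ 0. Then H is injective on the set of 0-finite configurations (configurations with finitely many nonzero entries), but H is not surjective. -/
/-- For `H` on `{0,1}^ℤ` with `H(x)_0 = 0` and `H(x)_i = x_{i-1} XOR x_{i+1}` for
`i ≠ 0`: `H` is injective on the set of 0-finite configurations but not surjective. -/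
theorem stmt_5
    (H : (ℤ → Bool) → (ℤ → Bool))
    (hH : ∀ (x : ℤ → Bool) (i : ℤ),
      H x i = if i = 0 then false else xor (x (i - 1)) (x (i + 1))) :
    Set.InjOn H {x : ℤ → Bool | ∃ k : ℕ, ∀ i : ℤ, (k : ℤ) < |i| → x i = false} ∧
    ¬ Function.Surjective H := by
  constructor
  · rintro x ⟨kx, hx⟩ y ⟨ky, hy⟩ hxy
    have key : ∀ i : ℤ, i ≠ 0 → xor (x (i-1)) (x (i+1)) = xor (y (i-1)) (y (i+1)) := by
      intro i hi
      have := congrFun hxy i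
      rw [hH, hH, if_neg hi, if_neg hi] at this
      exact this
    have hfar : ∀ i : ℤ, ((max kx ky : ℕ) : ℤ) < |i| → x i = y i := by
      intro i hi
      have h1 : (kx : ℤ) < |i| := lt_of_le_of_lt (by push_cast; simp) hi
      have h2 : (ky : ℤ) < |i| := lt_of_le_of_lt (by push_cast; simp) hi
      rw [hx i h1, hy i h2]
    have pos : ∀ n : ℕ, ∀ j : ℤ, 0 ≤ j → x (j + 2*n) = y (j + 2*n) → x j = y j := by
      intro n
      induction n with
      | zero => intro j _ h; simpa using h
      | succ n ih =>
        intro j hj h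
        have h2 : x (j + 2) = y (j + 2) := by
          apply ih (j+2) (by omega)
          have e : j + 2 + 2*(n:ℤ) = j + 2*((n:ℕ)+1 : ℕ) := by push_cast; ring
          rw [e]; exact h
        have hk := key (j+1) (by omega)
        have e1 : j + 1 - 1 = j := by ring
        have e2 : j + 1 + 1 = j + 2 := by ring
        rw [e1, e2, h2] at hk
        cases hy2 : y (j+2) <;> rw [hy2] at hk <;> simp_all
    have neg : ∀ n : ℕ, ∀ j : ℤ, j ≤ 0 → x (j - 2*n) = y (j - 2*n) → x j = y j := by
      intro n
      induction n with
      | zero => intro j _ h; simpa using h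
      | succ n ih =>
        intro j hj h
        have h2 : x (j - 2) = y (j - 2) := by
          apply ih (j-2) (by omega)
          have e : j - 2 - 2*(n:ℤ) = j - 2*((n:ℕ)+1 : ℕ) := by push_cast; ring
          rw [e]; exact h
        have hk := key (j-1) (by omega)
        have e1 : j - 1 - 1 = j - 2 := by ring
        have e2 : j - 1 + 1 = j := by ring
        rw [e1, e2, h2] at hk
        cases hy2 : y (j-2) <;> rw [hy2] at hk <;> simp_all
    funext i
    rcases le_or_gt 0 i with hi | hi
    · apply pos (max kx ky + 1) i hi
      apply hfar
      push_cast
      rw [abs_of_nonneg (by omega)]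
      omega
    · apply neg (max kx ky + 1) i (le_of_lt hi)
      apply hfar
      push_cast
      rw [abs_of_nonpos (by omega)]
      omega
  · intro hs
    obtain ⟨x, hx⟩ := hs (fun _ => true)
    have := congrFun hx 0
    rw [hH] at this
    simp at this
end

section
/- Let A = {0,1} and define H : A^ℤ → A^ℤ by H(x)_0 = 0 and H(x)_i = x_{i-1} XOR x_{i+1} for i ≠ 0. Then H is positively expansive with expansivity constant 1/2: for all distinct x, y ∈ A^ℤ there exists n ∈ ℕ with d(H^n(x), H^n(y)) ≥ 1/2. However, H is not surjective, hence not transitive. -/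
/-- For `H` on `{0,1}^ℤ` with `H(x)_0 = 0` and `H(x)_i = x_{i-1} XOR x_{i+1}` for
`i ≠ 0`: `H` is positively expansive with expansivity constant `1/2` (for distinct
`x, y` there is `n` with `d(H^n x, H^n y) ≥ 1/2`, i.e. `H^n x` and `H^n y` differ at
some coordinate `i` with `|i| ≤ 1`), but `H` is not surjective, hence not transitive. -/
theorem stmt_6
    (H : (ℤ → Bool) → (ℤ → Bool))
    (hH : ∀ (x : ℤ → Bool) (i : ℤ),
      H x i = if i = 0 then false else xor (x (i - 1)) (x (i + 1))) :
    (∀ x y : ℤ → Bool, x ≠ y →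
      ∃ (n : ℕ) (i : ℤ), |i| ≤ 1 ∧ H^[n] x i ≠ H^[n] y i) ∧
    ¬ Function.Surjective H ∧
    ¬ (∀ U V : Set (ℤ → Bool), IsOpen U → IsOpen V → U.Nonempty → V.Nonempty →
        ∃ n : ℕ, (H^[n] '' U ∩ V).Nonempty) := by
  classical
  have xorcancel : ∀ a b c : Bool, b ≠ c → xor a b ≠ xor a c := by decide
  have xorcancel' : ∀ a b c : Bool, b ≠ c → xor b a ≠ xor c a := by decide
  refine ⟨?_, ?_, ?_⟩
  · -- positive expansivity
    have key : ∀ k : ℕ, ∀ x y : ℤ → Bool, ∀ j : ℤ, j.natAbs = k → x j ≠ y j →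
        (∀ i : ℤ, i.natAbs < k → x i = y i) →
        ∃ (n : ℕ) (i : ℤ), |i| ≤ 1 ∧ H^[n] x i ≠ H^[n] y i := by
      intro k
      induction k using Nat.strong_induction_on with
      | _ k IH =>
        intro x y j hj hxy hagree
        by_cases hk : k ≤ 1
        · refine ⟨0, j, ?_, hxy⟩
          rw [Int.abs_eq_natAbs]
          exact_mod_cast hj ▸ hk
        · push_neg at hk
          -- k ≥ 2
          have hagree' : ∀ i : ℤ, i.natAbs < k - 1 → H x i = H y i := by
            intro i hi
            rw [hH, hH]
            by_cases h0 : i = 0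
            · simp [h0]
            · simp only [h0, if_false]
              rw [hagree (i - 1) (by omega), hagree (i + 1) (by omega)]
          have hj0 : j ≠ 0 := by omega
          rcases lt_or_gt_of_ne hj0 with hneg | hpos
          · -- j = -k, use j' = j + 1
            have hj'ne : H x (j + 1) ≠ H y (j + 1) := by
              rw [hH, hH]
              have h0 : ¬ (j + 1 = 0) := by omega
              simp only [h0, if_false]
              have : j + 1 - 1 = j := by ring
              rw [this]
              have heq : x (j + 1 + 1) = y (j + 1 + 1) := hagree _ (by omega)
              rw [heq]
              exact xorcancel' _ _ _ hxy
            obtain ⟨n, i, h1, h2⟩ := IH (k - 1) (by omega) (H x) (H y) (j + 1)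
              (by omega) hj'ne hagree'
            exact ⟨n + 1, i, h1, by
              rwa [Function.iterate_succ_apply, Function.iterate_succ_apply]⟩
          · -- j = k, use j' = j - 1
            have hj'ne : H x (j - 1) ≠ H y (j - 1) := by
              rw [hH, hH]
              have h0 : ¬ (j - 1 = 0) := by omega
              simp only [h0, if_false]
              have : j - 1 + 1 = j := by ring
              rw [this]
              have heq : x (j - 1 - 1) = y (j - 1 - 1) := hagree _ (by omega)
              rw [heq]
              exact xorcancel _ _ _ hxy
            obtain ⟨n, i, h1, h2⟩ := IH (k - 1) (by omega) (H x) (H y) (j - 1)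
              (by omega) hj'ne hagree'
            exact ⟨n + 1, i, h1, by
              rwa [Function.iterate_succ_apply, Function.iterate_succ_apply]⟩
    intro x y hne
    obtain ⟨j, hj⟩ := Function.ne_iff.mp hne
    have hex : ∃ k : ℕ, ∃ j : ℤ, j.natAbs = k ∧ x j ≠ y j := ⟨j.natAbs, j, rfl, hj⟩
    obtain ⟨j0, hj0, hj0ne⟩ := Nat.find_spec hex
    refine key (Nat.find hex) x y j0 hj0 hj0ne ?_
    intro i hi
    by_contra hcon
    exact Nat.find_min hex hi ⟨i, rfl, hcon⟩
  · -- not surjective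
    intro hs
    obtain ⟨x, hx⟩ := hs (fun _ => true)
    have := congrFun hx 0
    rw [hH] at this
    simp at this
  · -- not transitive
    intro htr
    obtain ⟨n, z, ⟨w, hwU, hwz⟩, hzV⟩ :=
      htr {z : ℤ → Bool | z 0 = false} {z : ℤ → Bool | z 0 = true}
        (((continuous_apply (0 : ℤ) : Continuous fun z : ℤ → Bool => z 0)).isOpen_preimage ({false} : Set Bool) (isOpen_discrete _))
        (((continuous_apply (0 : ℤ) : Continuous fun z : ℤ → Bool => z 0)).isOpen_preimage ({true} : Set Bool) (isOpen_discrete _))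
        ⟨fun _ => false, rfl⟩ ⟨fun _ => true, rfl⟩
    simp only [Set.mem_setOf_eq] at hwU hzV
    cases n with
    | zero =>
        rw [Function.iterate_zero_apply] at hwz
        rw [← hwz] at hzV
        rw [hwU] at hzV
        exact Bool.false_ne_true hzV
    | succ m =>
        rw [Function.iterate_succ_apply'] at hwz
        have : z 0 = false := by rw [← hwz, hH]; simp
        rw [this] at hzV
        exact Bool.false_ne_true hzV
end

section
/- Let A be a finite alphabet with at least two elements and define H : A^ℤ → A^ℤ by H(x)_i = x_{i+1} for i < 0, H(x)_0 = x_0, and H(x)_i = x_{i-1} for i > 0. Then H is injective but not surjective; indeed a configuration y has a preimage if and only if y_{-1} = y_0 = y_1. -/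
/-- For `H` on `A^ℤ` (|A| ≥ 2) with `H(x)_i = x_{i+1}` for `i < 0`, `H(x)_0 = x_0`,
`H(x)_i = x_{i-1}` for `i > 0`: `H` is injective, not surjective, and `y` has a
preimage iff `y_{-1} = y_0 = y_1`. -/
theorem stmt_7 {A : Type} [Fintype A] (hA : 2 ≤ Fintype.card A)
    (H : (ℤ → A) → (ℤ → A))
    (hH : ∀ (x : ℤ → A) (i : ℤ),
      H x i = if i < 0 then x (i + 1) else if i = 0 then x 0 else x (i - 1)) :
    Function.Injective H ∧
    ¬ Function.Surjective H ∧
    (∀ y : ℤ → A, (∃ x, H x = y) ↔ (y (-1) = y 0 ∧ y 0 = y 1)) := by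
  have key : ∀ y : ℤ → A, (∃ x, H x = y) ↔ (y (-1) = y 0 ∧ y 0 = y 1) := by
    intro y
    constructor
    · rintro ⟨x, rfl⟩
      have h1 := hH x (-1)
      have h2 := hH x 0
      have h3 := hH x 1
      norm_num at h1 h2 h3
      simp [h1, h2, h3]
    · rintro ⟨h1, h2⟩
      refine ⟨fun k => if k ≤ 0 then y (k - 1) else y (k + 1), ?_⟩
      funext i
      rw [hH]
      rcases lt_trichotomy i 0 with h | h | h
      · simp only [h, if_pos]
        have : i + 1 ≤ 0 := by omega
        simp [this]
      · subst h; norm_num; exact h1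
      · have h0 : ¬ i < 0 := by omega
        have h0' : i ≠ 0 := by omega
        simp only [h0, if_false, h0', if_false]
        rcases eq_or_lt_of_le (by omega : (1:ℤ) ≤ i) with h1' | h1'
        · have : i - 1 ≤ 0 := by omega
          simp only [this, if_pos]
          rw [← h1']
          norm_num
          rw [h1, h2]
        · have : ¬ i - 1 ≤ 0 := by omega
          simp only [this, if_false]
          ring_nf
  refine ⟨?_, ?_, key⟩
  · intro x x' hxx'
    funext j
    rcases le_or_gt j 0 with h | h
    · have e1 := hH x (j - 1)
      have e2 := hH x' (j - 1)
      have hj : j - 1 < 0 := by omega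
      rw [if_pos hj] at e1 e2
      have : H x (j - 1) = H x' (j - 1) := by rw [hxx']
      rw [e1, e2] at this
      simpa using this
    · have e1 := hH x (j + 1)
      have e2 := hH x' (j + 1)
      have hj : ¬ j + 1 < 0 := by omega
      have hj' : j + 1 ≠ 0 := by omega
      rw [if_neg hj, if_neg hj'] at e1 e2
      have : H x (j + 1) = H x' (j + 1) := by rw [hxx']
      rw [e1, e2] at this
      simpa using this
  · obtain ⟨a, b, hab⟩ := Fintype.exists_pair_of_one_lt_card hA
    intro hs
    obtain ⟨x, hx⟩ := hs (fun i => if i = 0 then a else b)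
    have := (key _).mp ⟨x, hx⟩
    simp at this
    exact hab this.1.symm
end

section
/- Let H be a p-ν-CA with structural period 1, right default rule f and left default rule g (both of radius r), i.e., there is k ∈ ℕ with h_i = f for all i > k and h_i = g for all i < -k. If H is surjective, then both the CA F with local rule f and the CA G with local rule g are surjective. -/
open Filter

lemma limit_exists {A : Type} [Fintype A] (U : Ultrafilter ℕ) (φ : ℕ → A) :
    ∃ a : A, {m | φ m = a} ∈ U := by
  by_contra hc
  push_neg at hc
  have h1 : ∀ a : A, {m | φ m = a}ᶜ ∈ U := fun a =>
    Ultrafilter.compl_mem_iff_notMem.2 (hc a)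
  have h2 : (⋂ a : A, {m | φ m = a}ᶜ) ∈ U := by
    rw [← Ultrafilter.mem_coe, Filter.iInter_mem]; exact h1
  have h3 : (⋂ a : A, {m | φ m = a}ᶜ) = ∅ := by
    ext m; simp
  rw [h3] at h2
  exact Filter.empty_notMem _ h2

lemma ca_limit {A : Type} [Fintype A] (r : ℕ)
    (f : (Fin (2 * r + 1) → A) → A)
    (F : (ℤ → A) → (ℤ → A))
    (hF : ∀ (x : ℤ → A) (i : ℤ),
      F x i = f (fun j => x (i - (r : ℤ) + ((j : ℕ) : ℤ))))
    (y : ℤ → A) (w : ℕ → ℤ → A)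
    (hw : ∀ i : ℤ, ∀ᶠ m in atTop, F (w m) i = y i) :
    ∃ x, F x = y := by
  have : (cofinite : Filter ℕ).NeBot := Nat.cofinite_eq_atTop ▸ atTop_neBot
  let U : Ultrafilter ℕ := Ultrafilter.of cofinite
  have hU : ∀ s : Set ℕ, s ∈ (atTop : Filter ℕ) → s ∈ U := fun s hs =>
    Ultrafilter.of_le cofinite (Nat.cofinite_eq_atTop ▸ hs)
  choose x hx using fun i : ℤ => limit_exists U (fun m => w m i)
  refine ⟨x, funext fun i => ?_⟩
  have hT : (⋂ j : Fin (2 * r + 1), {m | w m (i - (r : ℤ) + ((j : ℕ) : ℤ)) =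
      x (i - (r : ℤ) + ((j : ℕ) : ℤ))}) ∈ U := by
    rw [← Ultrafilter.mem_coe, Filter.iInter_mem]; exact fun j => hx _
  have hS : {m | F (w m) i = y i} ∈ U := hU _ (hw i)
  obtain ⟨m, hm⟩ := Ultrafilter.nonempty_of_mem (Filter.inter_mem hT hS)
  obtain ⟨hm1, hm2⟩ := hm
  rw [hF]
  have : (fun j : Fin (2 * r + 1) => x (i - (r : ℤ) + ((j : ℕ) : ℤ))) =
      (fun j : Fin (2 * r + 1) => w m (i - (r : ℤ) + ((j : ℕ) : ℤ))) := by
    funext j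
    exact (Set.mem_iInter.1 hm1 j).symm
  rw [this, ← hF]
  exact hm2

/-- For a p-ν-CA `H` with structural period 1, right default rule `f` and left default
rule `g` (all rules of radius `r`, `h_i = f` for `i > k`, `h_i = g` for `i < -k`):
if `H` is surjective then both CA `F` (rule `f`) and `G` (rule `g`) are surjective. -/
theorem stmt_8 {A : Type} [Fintype A] [Nonempty A]
    (r k : ℕ)
    (h : ℤ → (Fin (2 * r + 1) → A) → A)
    (f g : (Fin (2 * r + 1) → A) → A)
    (hf : ∀ i : ℤ, (k : ℤ) < i → h i = f)
    (hg : ∀ i : ℤ, i < -(k : ℤ) → h i = g)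
    (H F G : (ℤ → A) → (ℤ → A))
    (hH : ∀ (x : ℤ → A) (i : ℤ),
      H x i = h i (fun j => x (i - (r : ℤ) + ((j : ℕ) : ℤ))))
    (hF : ∀ (x : ℤ → A) (i : ℤ),
      F x i = f (fun j => x (i - (r : ℤ) + ((j : ℕ) : ℤ))))
    (hG : ∀ (x : ℤ → A) (i : ℤ),
      G x i = g (fun j => x (i - (r : ℤ) + ((j : ℕ) : ℤ)))) :
    Function.Surjective H → Function.Surjective F ∧ Function.Surjective G := by
  intro hHs
  constructor
  · intro y
    choose xm hxm using fun m : ℕ => hHs (fun i => y (i - (m : ℤ)))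
    apply ca_limit r f F hF y (fun m i => xm m (i + (m : ℤ)))
    intro i
    rw [Filter.eventually_atTop]
    refine ⟨(k - i + 1).toNat, fun m hm => ?_⟩
    have hki : (k : ℤ) < i + m := by
      have := Int.self_le_toNat (k - i + 1)
      have : ((k : ℤ) - i + 1 : ℤ) ≤ (m : ℤ) := le_trans this (by exact_mod_cast hm)
      omega
    have h1 : H (xm m) (i + m) = y i := by
      rw [hxm m]; simp
    rw [hH, hf _ hki] at h1
    rw [hF, ← h1]
    congr 1
    funext j
    congr 1
    ring
  · intro y
    choose xm hxm using fun m : ℕ => hHs (fun i => y (i + (m : ℤ)))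
    apply ca_limit r g G hG y (fun m i => xm m (i - (m : ℤ)))
    intro i
    rw [Filter.eventually_atTop]
    refine ⟨(i + k + 1).toNat, fun m hm => ?_⟩
    have hki : i - m < -(k : ℤ) := by
      have := Int.self_le_toNat (i + k + 1)
      have : (i + (k : ℤ) + 1 : ℤ) ≤ (m : ℤ) := le_trans this (by exact_mod_cast hm)
      omega
    have h1 : H (xm m) (i - m) = y i := by
      rw [hxm m]; simp
    rw [hH, hg _ hki] at h1
    rw [hG, ← h1]
    congr 1
    funext j
    congr 1
    ring
end

section
/- Let H be a p-ν-CA with structural period 1, right default rule f and left default rule g. If H is injective, then both the CA F with local rule f and the CA G with local rule g are surjective. -/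
/-!
Injectivity of `H` makes the uniform rule `f` pre-injective: two configurations differing in
finitely many cells and having the same `f`-image can be translated far to the right, where every
rule of `H` is `f`, and there their `H`-images coincide, so they are equal. The same works for `g`
on the left. Pre-injective one-dimensional CA are surjective (Myhill): if some word `z` of length
`n` were an orphan, the `q ^ (L * n)` words of length `L * n` padded by a constant background
would have pairwise different images on a window of length `L * n + 2 * r`, whereas such windows
avoid `z` on `L` consecutive blocks, leaving at most `(q ^ n - 1) ^ L * q ^ (2 * r)` of them, too few
for large `L`. So every finite pattern has a preimage, and compactness of `ℤ → A` gives
surjectivity.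
-/

open Function Filter Topology Pointwise

section

variable {A : Type*} {r : ℕ}

def localMap (r : ℕ) (h : ℤ → (Fin (2 * r + 1) → A) → A) (x : ℤ → A) (i : ℤ) : A :=
  h i fun j => x (i - r + j)

def Preinjective (F : (ℤ → A) → ℤ → A) : Prop :=
  ∀ ⦃x y : ℤ → A⦄, {i | x i ≠ y i}.Finite → F x = F y → x = y

lemma localMap_congr {h : ℤ → (Fin (2 * r + 1) → A) → A} {x y : ℤ → A} {i : ℤ}
    (hxy : ∀ j : Fin (2 * r + 1), x (i - r + j) = y (i - r + j)) :
    localMap r h x i = localMap r h y i :=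
  congrArg (h i) (funext hxy)

lemma localMap_const_shift (f : (Fin (2 * r + 1) → A) → A) (x : ℤ → A) (t i : ℤ) :
    localMap r (fun _ => f) (fun s => x (s + t)) i = localMap r (fun _ => f) x (i + t) := by
  simp only [localMap]
  congr 1
  funext j
  congr 1
  ring

lemma Filter.Eventually.exists_forall_add {l : Filter ℤ} [l.NeBot]
    (hl : ∀ d, Tendsto (· + d) l l) {p : ℤ → Prop} (hp : ∀ᶠ i in l, p i) (D : Finset ℤ) :
    ∃ t, ∀ d ∈ D, p (d + t) := by
  obtain ⟨t, ht⟩ := ((eventually_all_finset D).2 fun d _ => (hl d).eventually hp).exists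
  exact ⟨t, fun d hd => add_comm t d ▸ ht d hd⟩

theorem Preinjective.of_injective_localMap {h : ℤ → (Fin (2 * r + 1) → A) → A}
    {f : (Fin (2 * r + 1) → A) → A} (hinj : Injective (localMap r h))
    (htrans : ∀ D : Finset ℤ, ∃ t, ∀ d ∈ D, h (d + t) = f) :
    Preinjective (localMap r fun _ => f) := by
  classical
  intro x y hxy hF
  let D := hxy.toFinset + Finset.Icc (-(r : ℤ)) r
  obtain ⟨t, ht⟩ := htrans D
  suffices (fun i => x (i + -t)) = fun i => y (i + -t) by
    funext i
    simpa using congrFun this (i + t)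
  apply hinj
  funext i
  by_cases hi : i + -t ∈ D
  · have hfi : h i = f := by simpa using ht _ hi
    have hrule : ∀ z, localMap r h z i = localMap r (fun _ => f) z i := by
      simp only [localMap, hfi, implies_true]
    rw [hrule, hrule, localMap_const_shift, localMap_const_shift, hF]
  · refine localMap_congr fun j => ?_
    by_contra hne
    refine hi (Finset.mem_add.2 ⟨i - r + j + -t, by simpa using hne, r - j, ?_, by ring⟩)
    have := j.2
    simp only [Finset.mem_Icc]
    omega

theorem Preinjective.exists_injective_window {f : (Fin (2 * r + 1) → A) → A}
    (hF : Preinjective (localMap r fun _ => f)) (a : A) (m : ℕ) :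
    ∃ pad : (Fin m → A) → ℤ → A,
      Injective fun w (t : Fin (m + 2 * r)) => localMap r (fun _ => f) (pad w) (t - r) := by
  let ι : Fin m → ℤ := fun j => j
  have hι : Injective ι := Nat.cast_injective.comp Fin.val_injective
  refine ⟨fun w => extend ι w fun _ => a, fun w w' hww => ?_⟩
  have hout : ∀ i ∉ Set.range ι, extend ι w (fun _ => a) i = extend ι w' (fun _ => a) i :=
    fun i hi => by rw [extend_apply' _ _ _ hi, extend_apply' _ _ _ hi]
  have hpad : extend ι w (fun _ => a) = extend ι w' (fun _ => a) := by
    refine hF ((Set.finite_range ι).subset fun i hi => by_contra fun h => hi (hout i h)) ?_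
    funext i
    by_cases hi : -(r : ℤ) ≤ i ∧ i < m + r
    · have := congrFun hww ⟨(i + r).toNat, by omega⟩
      dsimp only at this
      rwa [show ((i + r).toNat : ℤ) - r = i by omega] at this
    · refine localMap_congr fun j => hout _ ?_
      rintro ⟨j', hj'⟩
      have := j.2
      have := j'.2
      simp only [ι] at hj'
      omega
  funext j
  have := congrFun hpad (ι j)
  rwa [hι.extend_apply, hι.extend_apply] at this

lemma Nat.exists_mul_pow_lt_pow (c : ℕ) {a b : ℕ} (hab : a < b) : ∃ L, c * a ^ L < b ^ L := by
  have hb : (0 : ℝ) < b := by exact_mod_cast (Nat.zero_le a).trans_lt hab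
  obtain ⟨L, hL⟩ := exists_pow_lt_of_lt_one (by positivity : (0 : ℝ) < 1 / (c + 1))
    ((div_lt_one hb).2 (by exact_mod_cast hab : (a : ℝ) < b))
  refine ⟨L, ?_⟩
  rw [div_pow, div_lt_div_iff₀ (by positivity) (by positivity)] at hL
  have : (c : ℝ) * a ^ L < b ^ L := by nlinarith [pow_nonneg (Nat.cast_nonneg a : (0 : ℝ) ≤ a) L]
  exact_mod_cast this

lemma injective_blocks_tail (L n m : ℕ) :
    Injective fun u : Fin (L * n + m) → A =>
      ((fun b j => u (Fin.castAdd m (finProdFinEquiv (b, j)))), fun s => u (Fin.natAdd _ s)) := by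
  intro u u' huu
  simp only [Prod.mk.injEq, funext_iff] at huu
  funext t
  refine Fin.addCases (fun t => ?_) (fun s => huu.2 s) t
  obtain ⟨⟨b, j⟩, rfl⟩ := finProdFinEquiv.surjective t
  exact huu.1 b j

theorem Preinjective.exists_localMap_eq [Fintype A] [Nonempty A] {f : (Fin (2 * r + 1) → A) → A}
    (hF : Preinjective (localMap r fun _ => f)) (n : ℕ) (z : Fin n → A) :
    ∃ x, ∀ j : Fin n, localMap r (fun _ => f) x j = z j := by
  classical
  by_contra! horph
  set q := Fintype.card A
  obtain ⟨L, hL⟩ := Nat.exists_mul_pow_lt_pow (q ^ (2 * r))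
    (Nat.sub_lt (Nat.pos_of_ne_zero (pow_ne_zero n (Fintype.card_ne_zero (α := A)))) one_pos)
  obtain ⟨pad, hpad⟩ := hF.exists_injective_window (Classical.arbitrary A) (L * n)
  let split := fun u : Fin (L * n + 2 * r) → A =>
      ((fun b j => u (Fin.castAdd (2 * r) (finProdFinEquiv (b, j)))), fun s => u (Fin.natAdd _ s))
  have hblock : ∀ w b, (split fun t => localMap r (fun _ => f) (pad w) (t - r)).1 b ≠ z := by
    intro w b hb
    obtain ⟨j, hj⟩ := horph fun i => pad w (i + (n * b - r))
    apply hj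
    rw [localMap_const_shift, ← congrFun hb j]
    simp only [split, Fin.val_castAdd, finProdFinEquiv_apply_val]
    push_cast
    ring_nf
  let Φ (w : Fin (L * n) → A) : (Fin L → {u : Fin n → A // u ≠ z}) × (Fin (2 * r) → A) :=
    (fun b => ⟨_, hblock w b⟩, (split fun t => localMap r (fun _ => f) (pad w) (t - r)).2)
  have hΦ : Injective Φ := by
    refine fun w w' hww => hpad (injective_blocks_tail L n (2 * r) (Prod.ext ?_ ?_))
    · funext b
      exact congrArg Subtype.val (congrFun (congrArg Prod.fst hww) b)
    · have hsnd := congrArg Prod.snd hww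
      exact hsnd
  have hcard := Fintype.card_le_of_injective Φ hΦ
  simp only [Fintype.card_prod, Fintype.card_fun, Fintype.card_subtype_compl, Fintype.card_fin,
    Fintype.card_unique] at hcard
  rw [mul_comm L n, pow_mul] at hcard
  rw [mul_comm] at hL
  exact absurd hcard (not_le.2 hL)

theorem surjective_localMap_of_forall_exists_eq [Finite A] {f : (Fin (2 * r + 1) → A) → A}
    (hwin : ∀ (n : ℕ) (z : Fin n → A), ∃ x, ∀ j : Fin n, localMap r (fun _ => f) x j = z j) :
    Surjective (localMap r fun _ => f) := by
  let _ : TopologicalSpace A := ⊥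
  have : DiscreteTopology A := ⟨rfl⟩
  intro y
  have happrox : ∀ n : ℕ, ∃ x, ∀ i : ℤ, i.natAbs ≤ n → localMap r (fun _ => f) x i = y i := by
    intro n
    obtain ⟨x, hx⟩ := hwin (2 * n + 1) fun j => y (j - n)
    refine ⟨fun s => x (s + n), fun i hi => ?_⟩
    rw [localMap_const_shift]
    have := hx ⟨(i + n).toNat, by omega⟩
    dsimp only at this
    rwa [show ((i + n).toNat : ℤ) = i + n by omega, add_sub_cancel_right] at this
  choose X hX using happrox
  have hcont : Continuous (localMap r fun _ => f) :=
    continuous_pi fun i => continuous_of_discreteTopology.comp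
      (continuous_pi fun j => continuous_apply _)
  have hlim : Tendsto (fun n => localMap r (fun _ => f) (X n)) atTop (𝓝 y) :=
    tendsto_pi_nhds.2 fun i => tendsto_const_nhds.congr'
      ((eventually_ge_atTop i.natAbs).mono fun n hn => (hX n i hn).symm)
  have hclosed := (isCompact_range hcont).isClosed
  exact hclosed.closure_subset
    (mem_closure_of_tendsto hlim (Eventually.of_forall fun n => ⟨X n, rfl⟩))

theorem Preinjective.surjective_localMap [Fintype A] [Nonempty A]
    {f : (Fin (2 * r + 1) → A) → A} (hF : Preinjective (localMap r fun _ => f)) :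
    Surjective (localMap r fun _ => f) :=
  surjective_localMap_of_forall_exists_eq hF.exists_localMap_eq

end

/-- For a p-ν-CA `H` with structural period 1, right default rule `f` and left default
rule `g` (all rules of radius `r`, `h_i = f` for `i > k`, `h_i = g` for `i < -k`):
if `H` is injective then both CA `F` (rule `f`) and `G` (rule `g`) are surjective. -/
theorem stmt_9 {A : Type} [Fintype A] [Nonempty A]
    (r k : ℕ)
    (h : ℤ → (Fin (2 * r + 1) → A) → A)
    (f g : (Fin (2 * r + 1) → A) → A)
    (hf : ∀ i : ℤ, (k : ℤ) < i → h i = f)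
    (hg : ∀ i : ℤ, i < -(k : ℤ) → h i = g)
    (H F G : (ℤ → A) → (ℤ → A))
    (hH : ∀ (x : ℤ → A) (i : ℤ),
      H x i = h i (fun j => x (i - (r : ℤ) + ((j : ℕ) : ℤ))))
    (hF : ∀ (x : ℤ → A) (i : ℤ),
      F x i = f (fun j => x (i - (r : ℤ) + ((j : ℕ) : ℤ))))
    (hG : ∀ (x : ℤ → A) (i : ℤ),
      G x i = g (fun j => x (i - (r : ℤ) + ((j : ℕ) : ℤ)))) :
    Function.Injective H → Function.Surjective F ∧ Function.Surjective G := by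
  intro hinj
  obtain rfl : H = localMap r h := funext fun x => funext (hH x)
  obtain rfl : F = localMap r fun _ => f := funext fun x => funext (hF x)
  obtain rfl : G = localMap r fun _ => g := funext fun x => funext (hG x)
  have hf_atTop : ∀ᶠ i in atTop, h i = f := (eventually_gt_atTop (k : ℤ)).mono hf
  have hg_atBot : ∀ᶠ i in atBot, h i = g := (eventually_lt_atBot (-(k : ℤ))).mono hg
  exact
    ⟨(Preinjective.of_injective_localMap hinj (hf_atTop.exists_forall_add
        fun d => tendsto_atTop_add_const_right _ d tendsto_id)).surjective_localMap,
      (Preinjective.of_injective_localMap hinj (hg_atBot.exists_forall_add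
        fun d => tendsto_atBot_add_const_right _ d tendsto_id)).surjective_localMap⟩
end

section
/- Let F be an equicontinuous CA with local rule f of radius r, so that F^{q+p} = F^q for some q ≥ 0, p ≥ 1. Then there exists K > 0 (namely K = (2p+2q+1)r) such that every word u ∈ A^K is strongly r-blocking for F: for every ν-CA H with h_i = f for all i ∈ [0,K), and all x, y ∈ [u]_0 and all n ≥ 0, H^n(x) and H^n(y) agree on the coordinates [(q+p)r, (q+p+1)r). -/
set_option maxHeartbeats 1000000


/-- Let `F` be an equicontinuous CA with rule `f` of radius `r` (`F^{q+p} = F^q`,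
`p ≥ 1`). Then with `K = (2p+2q+1)r`, every word of length `K` is strongly `r`-blocking
for `F`: for every ν-CA `H` applying `f` at all positions in `[0,K)`, any two
configurations agreeing on `[0,K)` have, for all `n`, the same image under `H^n`
on the coordinates `[(q+p)r, (q+p+1)r)`. -/
theorem stmt_11 {A : Type} [Fintype A] [Nonempty A]
    (r q p : ℕ) (hp : 1 ≤ p)
    (f : (Fin (2 * r + 1) → A) → A)
    (F : (ℤ → A) → (ℤ → A))
    (hF : ∀ (x : ℤ → A) (i : ℤ),
      F x i = f (fun j => x (i - (r : ℤ) + ((j : ℕ) : ℤ))))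
    (hper : F^[q + p] = F^[q])
    (H : (ℤ → A) → (ℤ → A))
    (hnu : ∃ (ρ : ℤ → ℕ) (h : ∀ i : ℤ, (Fin (2 * ρ i + 1) → A) → A),
      ∀ (x : ℤ → A) (i : ℤ),
        H x i = h i (fun j => x (i - (ρ i : ℤ) + ((j : ℕ) : ℤ))))
    (hloc : ∀ (x : ℤ → A) (i : ℤ),
      0 ≤ i → i < ((2 * p + 2 * q + 1) * r : ℕ) →
      H x i = f (fun j => x (i - (r : ℤ) + ((j : ℕ) : ℤ)))) :
    ∀ x y : ℤ → A,
      (∀ i : ℤ, 0 ≤ i → i < ((2 * p + 2 * q + 1) * r : ℕ) → x i = y i) →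
      ∀ (n : ℕ) (i : ℤ),
        ((q + p) * r : ℕ) ≤ i → i < ((q + p + 1) * r : ℕ) →
        H^[n] x i = H^[n] y i := by
  intro x y hxy n i hi1 hi2
  push_cast at hi1 hi2
  -- restated hypotheses with integer bounds
  have hloc' : ∀ (z : ℤ → A) (j : ℤ), 0 ≤ j → j < (2*(p:ℤ)+2*(q:ℤ)+1)*(r:ℤ) →
      H z j = f (fun k => z (j - (r : ℤ) + ((k : ℕ) : ℤ))) := by
    intro z j h1 h2
    exact hloc z j h1 (by exact_mod_cast h2)
  have hxy' : ∀ j : ℤ, 0 ≤ j → j < (2*(p:ℤ)+2*(q:ℤ)+1)*(r:ℤ) → x j = y j := by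
    intro j h1 h2
    exact hxy j h1 (by exact_mod_cast h2)
  -- one-step locality for F
  have hrF : ∀ (z z' : ℤ → A) (j : ℤ),
      (∀ k : ℤ, j - r ≤ k → k ≤ j + r → z k = z' k) → F z j = F z' j := by
    intro z z' j h
    rw [hF z j, hF z' j]
    congr 1
    funext jj
    have h1 : ((jj : ℕ) : ℤ) ≤ 2 * r := by
      have := jj.isLt
      omega
    have h0 : (0:ℤ) ≤ ((jj : ℕ) : ℤ) := Int.ofNat_nonneg _
    push_cast at h1 ⊢
    apply h <;> linarith
  -- one-step: H agrees with F inside the block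
  have hrH : ∀ (z z' : ℤ → A) (j : ℤ), 0 ≤ j → j < (2*(p:ℤ)+2*(q:ℤ)+1)*(r:ℤ) →
      (∀ k : ℤ, j - r ≤ k → k ≤ j + r → z k = z' k) → H z j = F z' j := by
    intro z z' j hj0 hjK h
    rw [hloc' z j hj0 hjK, hF z' j]
    congr 1
    funext jj
    have h1 : ((jj : ℕ) : ℤ) ≤ 2 * r := by
      have := jj.isLt
      omega
    have h0 : (0:ℤ) ≤ ((jj : ℕ) : ℤ) := Int.ofNat_nonneg _
    push_cast at h1 ⊢
    apply h <;> linarith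
  -- cone locality for iterates of F
  have locF : ∀ (t : ℕ) (z z' : ℤ → A) (i0 : ℤ),
      (∀ j : ℤ, i0 - (t:ℤ) * r ≤ j → j ≤ i0 + (t:ℤ) * r → z j = z' j) →
      F^[t] z i0 = F^[t] z' i0 := by
    intro t
    induction t with
    | zero =>
      intro z z' i0 h
      simpa using h i0 (by simp) (by simp)
    | succ t ih =>
      intro z z' i0 h
      rw [Function.iterate_succ_apply, Function.iterate_succ_apply]
      apply ih
      intro j hj1 hj2
      apply hrF
      intro k hk1 hk2
      push_cast at h
      apply h <;> linarith
  -- cone locality: iterates of H agree with iterates of F inside the block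
  have locH : ∀ (t : ℕ) (z z' : ℤ → A) (i0 : ℤ),
      (∀ j : ℤ, i0 - (t:ℤ) * r ≤ j → j ≤ i0 + (t:ℤ) * r →
        z j = z' j ∧ 0 ≤ j ∧ j < (2*(p:ℤ)+2*(q:ℤ)+1)*(r:ℤ)) →
      H^[t] z i0 = F^[t] z' i0 := by
    intro t
    induction t with
    | zero =>
      intro z z' i0 h
      exact (h i0 (by simp) (by simp)).1
    | succ t ih =>
      intro z z' i0 h
      push_cast at h
      rw [Function.iterate_succ_apply, Function.iterate_succ_apply]
      apply ih
      intro j hj1 hj2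
      obtain ⟨-, hj0, hjK⟩ := h j (by linarith) (by linarith)
      refine ⟨?_, hj0, hjK⟩
      apply hrH z z' j hj0 hjK
      intro k hk1 hk2
      exact (h k (by linarith) (by linarith)).1
  -- useful product inequalities
  have hpr0 : (0:ℤ) ≤ (p:ℤ) * r := by positivity
  have hqr0 : (0:ℤ) ≤ (q:ℤ) * r := by positivity
  rcases le_or_gt n (q + p) with hn | hn
  · -- small times: everything is in the cone
    have hnr : (n:ℤ) * r ≤ ((q:ℤ) + p) * r := by
      have h1 : (n:ℤ) ≤ (q:ℤ) + p := by exact_mod_cast hn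
      have h2 : (0:ℤ) ≤ (r:ℤ) := by positivity
      exact mul_le_mul_of_nonneg_right h1 h2
    have h1 : H^[n] x i = F^[n] x i := by
      apply locH n x x i
      intro j hj1 hj2
      exact ⟨rfl, by nlinarith, by nlinarith⟩
    have h2 : H^[n] y i = F^[n] y i := by
      apply locH n y y i
      intro j hj1 hj2
      exact ⟨rfl, by nlinarith, by nlinarith⟩
    have h3 : F^[n] x i = F^[n] y i := by
      apply locF n x y i
      intro j hj1 hj2
      exact hxy' j (by nlinarith) (by nlinarith)
    rw [h1, h2, h3]
  · -- large times: use periodicity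
    set m := n - (q + p) with hm
    have hn' : n = (q + p) + m := by omega
    -- the key claim: the q-step F-image of the H-orbit on the middle column
    -- is periodic in time with period p
    have claimD : ∀ (z : ℤ → A) (m' : ℕ),
        F^[q] (H^[m'] z) i = F^[q] (F^[m' % p] z) i := by
      intro z m'
      induction m' using Nat.strong_induction_on with
      | _ m' ih =>
        by_cases hmp : m' < p
        · rw [Nat.mod_eq_of_lt hmp]
          have hm'r : (m':ℤ) * r ≤ (p:ℤ) * r := by
            have h1 : (m':ℤ) ≤ (p:ℤ) := by exact_mod_cast le_of_lt hmp
            have h2 : (0:ℤ) ≤ (r:ℤ) := by positivity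
            exact mul_le_mul_of_nonneg_right h1 h2
          apply locF q
          intro j hj1 hj2
          apply locH m' z z j
          intro k hk1 hk2
          exact ⟨rfl, by nlinarith, by nlinarith⟩
        · push_neg at hmp
          have hA : ∀ j : ℤ, i - (q:ℤ) * r ≤ j → j ≤ i + (q:ℤ) * r →
              H^[m'] z j = F^[p] (H^[m' - p] z) j := by
            intro j hj1 hj2
            have e2 : m' = p + (m' - p) := by omega
            have e : H^[m'] z j = H^[p] (H^[m' - p] z) j := by
              conv_lhs => rw [e2]
              rw [Function.iterate_add_apply]
            rw [e]
            apply locH p _ _ j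
            intro k hk1 hk2
            exact ⟨rfl, by nlinarith, by nlinarith⟩
          have s1 : F^[q] (H^[m'] z) i = F^[q] (F^[p] (H^[m' - p] z)) i :=
            locF q _ _ i (fun j hj1 hj2 => hA j hj1 hj2)
          have s2 : F^[q] (F^[p] (H^[m' - p] z)) i = F^[q] (H^[m' - p] z) i := by
            rw [← Function.iterate_add_apply, hper]
          have s3 := ih (m' - p) (by omega)
          have s4 : (m' - p) % p = m' % p := (Nat.mod_eq_sub_mod hmp).symm
          rw [s1, s2, s3, s4]
    have hs : m % p < p := Nat.mod_lt _ (by omega)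
    have hsr : ((m % p : ℕ):ℤ) * r ≤ (p:ℤ) * r := by
      have h1 : ((m % p : ℕ):ℤ) ≤ (p:ℤ) := by exact_mod_cast le_of_lt hs
      have h2 : (0:ℤ) ≤ (r:ℤ) := by positivity
      exact mul_le_mul_of_nonneg_right h1 h2
    -- reduce H^[n] to F^[q] (H^[m] ·)
    have hred : ∀ z : ℤ → A, H^[n] z i = F^[q] (H^[m] z) i := by
      intro z
      rw [hn', Function.iterate_add_apply]
      have : H^[q + p] (H^[m] z) i = F^[q + p] (H^[m] z) i := by
        apply locH (q + p) _ _ i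
        intro j hj1 hj2
        push_cast at hj1 hj2
        exact ⟨rfl, by nlinarith, by nlinarith⟩
      rw [this, hper]
    -- the middle value of F^[q](F^[s] x) is determined by the word
    have hfin : F^[q] (F^[m % p] x) i = F^[q] (F^[m % p] y) i := by
      apply locF q
      intro j hj1 hj2
      apply locF (m % p) x y j
      intro k hk1 hk2
      exact hxy' k (by nlinarith) (by nlinarith)
    rw [hred x, hred y, claimD x m, claimD y m, hfin]
end

section
/- Let F be a CA with local rule f of radius r that is equicontinuous, and let H be any d-ν-CA with default rule f. Then H is ultimately periodic: there exist q' ≥ 0 and p' ≥ 1 such that H^{q'+p'} = H^{q'}. -/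
open Function

noncomputable def extWin {A : Type} [Nonempty A] (M : ℕ) (v : Fin (2 * M + 1) → A) : ℤ → A :=
  fun t => if h : 0 ≤ t + (M : ℤ) ∧ t ≤ (M : ℤ) then v ⟨(t + (M : ℤ)).toNat, by omega⟩
  else Classical.arbitrary A

lemma extWin_spec {A : Type} [Nonempty A] (M : ℕ) (y : ℤ → A) (t : ℤ) (ht : |t| ≤ (M : ℤ)) :
    extWin M (fun j : Fin (2 * M + 1) => y (((j : ℕ) : ℤ) - (M : ℤ))) t = y t := by
  obtain ⟨h1, h2⟩ := abs_le.mp ht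
  rw [extWin, dif_pos ⟨by omega, h2⟩]
  show y ((((t + (M : ℤ)).toNat : ℕ) : ℤ) - (M : ℤ)) = y t
  congr 1
  omega

noncomputable def theta {A : Type} [Nonempty A] (H : (ℤ → A) → (ℤ → A)) (K L p : ℕ) (hp : 0 < p)
    (s : Fin p → Fin (2 * L + 1) → A) : Fin p → Fin (2 * L + 1) → A :=
  fun a => if ha : (a : ℕ) + 1 < p then s ⟨(a : ℕ) + 1, ha⟩
    else fun j =>
      if |((j : ℕ) : ℤ) - (L : ℤ)| ≤ (K : ℤ) then
        H (extWin L (s ⟨p - 1, by omega⟩)) (((j : ℕ) : ℤ) - (L : ℤ))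
      else s ⟨0, hp⟩ j

lemma iter_stab {α : Type} [Fintype α] (T : α → α) (m : ℕ)
    (hm : Nat.factorial (Fintype.card α) ∣ m) (s : α) :
    T^[Fintype.card α + m] s = T^[Fintype.card α] s := by
  set N := Fintype.card α with hN
  have hni : ¬ Function.Injective (fun n : Fin (N + 1) => T^[(n : ℕ)] s) := by
    intro hinj
    have hcard := Fintype.card_le_of_injective _ hinj
    rw [← hN] at hcard
    simp [Fintype.card_fin] at hcard
  obtain ⟨a, b, hfab, hab⟩ := Function.not_injective_iff.mp hni
  have main : ∃ i c : ℕ, 0 < c ∧ c ≤ N ∧ i ≤ N ∧ T^[i + c] s = T^[i] s := by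
    have hbN : (b : ℕ) ≤ N := Nat.lt_succ_iff.mp b.isLt
    have haN : (a : ℕ) ≤ N := Nat.lt_succ_iff.mp a.isLt
    have hab' : (a : ℕ) ≠ (b : ℕ) := fun h => hab (Fin.ext h)
    rcases Nat.lt_or_ge (a : ℕ) (b : ℕ) with hlt | hge
    · exact ⟨a, (b : ℕ) - a, by omega, by omega, haN,
        by rw [show (a : ℕ) + ((b : ℕ) - a) = b from by omega]; exact hfab.symm⟩
    · have hlt : (b : ℕ) < a := by omega
      exact ⟨b, (a : ℕ) - b, by omega, by omega, hbN,
        by rw [show (b : ℕ) + ((a : ℕ) - b) = a from by omega]; exact hfab⟩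
  obtain ⟨i, c, hc0, hcN, hiN, hcyc⟩ := main
  have step : ∀ d : ℕ, T^[i + d + c] s = T^[i + d] s := by
    intro d
    rw [show i + d + c = d + (i + c) from by ring, Function.iterate_add_apply, hcyc,
      ← Function.iterate_add_apply, Nat.add_comm d i]
  have mult : ∀ (u : ℕ) (d : ℕ), T^[i + d + u * c] s = T^[i + d] s := by
    intro u
    induction u with
    | zero => simp
    | succ u ih =>
      intro d
      rw [show i + d + (u + 1) * c = i + (d + u * c) + c from by ring, step (d + u * c),
        show i + (d + u * c) = i + d + u * c from by ring]
      exact ih d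
  have hcm : c ∣ m := dvd_trans (Nat.dvd_factorial hc0 hcN) hm
  obtain ⟨u, rfl⟩ := hcm
  have hfin := mult u (N - i)
  rw [show i + (N - i) = N from by omega] at hfin
  rw [show N + c * u = N + u * c from by ring]
  exact hfin

/-- Let `F` be an equicontinuous CA with rule `f` of radius `r`, and `H` any d-ν-CA
with default rule `f`. Then `H` is ultimately periodic: `H^{q'+p'} = H^{q'}` for some
`q' ≥ 0`, `p' ≥ 1`. Equicontinuity of `F` is stated in the Cantor metric: points close
enough agree on a large central window, uniformly for all iterates. -/
theorem stmt_12 {A : Type} [Fintype A] [Nonempty A]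
    (r : ℕ)
    (f : (Fin (2 * r + 1) → A) → A)
    (F : (ℤ → A) → (ℤ → A))
    (hF : ∀ (x : ℤ → A) (i : ℤ),
      F x i = f (fun j => x (i - (r : ℤ) + ((j : ℕ) : ℤ))))
    (heq : ∀ m : ℕ, ∃ M : ℕ, ∀ x y : ℤ → A,
      (∀ i : ℤ, |i| ≤ (M : ℤ) → x i = y i) →
      ∀ (n : ℕ) (i : ℤ), |i| ≤ (m : ℤ) → F^[n] x i = F^[n] y i)
    (H : (ℤ → A) → (ℤ → A))
    (hnu : ∃ (ρ : ℤ → ℕ) (h : ∀ i : ℤ, (Fin (2 * ρ i + 1) → A) → A),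
      ∀ (x : ℤ → A) (i : ℤ),
        H x i = h i (fun j => x (i - (ρ i : ℤ) + ((j : ℕ) : ℤ))))
    (k : ℕ)
    (hdef : ∀ (x : ℤ → A) (i : ℤ), (k : ℤ) < |i| →
      H x i = f (fun j => x (i - (r : ℤ) + ((j : ℕ) : ℤ)))) :
    ∃ (q' p' : ℕ), 1 ≤ p' ∧ H^[q' + p'] = H^[q'] := by
  classical
  -- ### Step 1: F commutes with shifts
  have hshift1 : ∀ (c : ℤ) (x : ℤ → A) (i : ℤ), F (fun t => x (t + c)) i = F x (i + c) := by
    intro c x i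
    rw [hF, hF]
    congr 1
    funext j
    exact congrArg x (by ring)
  have hshift : ∀ (c : ℤ) (n : ℕ) (x : ℤ → A) (i : ℤ),
      F^[n] (fun t => x (t + c)) i = F^[n] x (i + c) := by
    intro c n
    induction n with
    | zero => intro x i; rfl
    | succ n ih =>
      intro x i
      rw [Function.iterate_succ_apply', Function.iterate_succ_apply']
      have hfn : F^[n] (fun t => x (t + c)) = fun t => F^[n] x (t + c) := funext (ih x)
      rw [hfn, hshift1]
  -- ### Step 2: F is ultimately periodic (from equicontinuity, by pigeonhole)
  obtain ⟨M, hM⟩ := heq 0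
  have hGkey : ∀ (n : ℕ) (x : ℤ → A) (i : ℤ),
      F^[n] x i = F^[n] (extWin M (fun j : Fin (2 * M + 1) => x (((j : ℕ) : ℤ) - (M : ℤ) + i))) 0 := by
    intro n x i
    have h2 := hshift i n x 0
    rw [zero_add] at h2
    rw [← h2]
    refine hM _ _ ?_ n 0 (by simp)
    intro t ht
    exact (extWin_spec M (fun t => x (t + i)) t ht).symm
  obtain ⟨a, b, hab, hGab⟩ := Finite.exists_ne_map_eq_of_infinite
    (fun (n : ℕ) (v : Fin (2 * M + 1) → A) => F^[n] (extWin M v) 0)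
  have hexists : ∃ q p : ℕ, 1 ≤ p ∧ F^[q + p] = F^[q] := by
    rcases Ne.lt_or_gt hab with hlt | hlt
    · refine ⟨a, b - a, by omega, ?_⟩
      funext x i
      rw [hGkey (a + (b - a)) x i, hGkey a x i, show a + (b - a) = b from by omega]
      exact (congrFun hGab _).symm
    · refine ⟨b, a - b, by omega, ?_⟩
      funext x i
      rw [hGkey (b + (a - b)) x i, hGkey b x i, show b + (a - b) = a from by omega]
      exact congrFun hGab _
  obtain ⟨q, p, hp, hqp⟩ := hexists
  have hp0 : 0 < p := hp
  obtain ⟨ρ, h, hh⟩ := hnu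
  -- constants
  obtain ⟨K, hK⟩ : ∃ K : ℕ, K = k + (q + p) * r := ⟨_, rfl⟩
  obtain ⟨R, hR⟩ : ∃ R : ℕ, R = max r (((Finset.Icc (-(k : ℤ)) (k : ℤ)).sup ρ)) := ⟨_, rfl⟩
  obtain ⟨L, hL⟩ : ∃ L : ℕ, L = K + R := ⟨_, rfl⟩
  -- ### Step 3: the cone lemma : far from the center, H^[t] = F^[t]
  have cone : ∀ (t : ℕ) (x : ℤ → A) (j : ℤ), (k : ℤ) + (t : ℤ) * (r : ℤ) < |j| →
      H^[t] x j = F^[t] x j := by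
    intro t
    induction t with
    | zero => intro x j _; rfl
    | succ t ih =>
      intro x j hj
      push_cast at hj
      have h0 : (0 : ℤ) ≤ ((t : ℤ) + 1) * (r : ℤ) := by positivity
      have hjk : (k : ℤ) < |j| := by linarith
      rw [Function.iterate_succ_apply', Function.iterate_succ_apply',
        hdef (H^[t] x) j hjk, hF]
      congr 1
      funext j'
      have hj'1 : (0 : ℤ) ≤ ((j' : ℕ) : ℤ) := by positivity
      have hj'2 : ((j' : ℕ) : ℤ) ≤ 2 * (r : ℤ) := by exact_mod_cast Nat.le_of_lt_succ j'.isLt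
      apply ih
      have hexp : ((t : ℤ) + 1) * (r : ℤ) = (t : ℤ) * r + r := by ring
      rcases lt_abs.mp hj with h1 | h1
      · have : (k : ℤ) + (t : ℤ) * r < j - r + ((j' : ℕ) : ℤ) := by linarith
        exact this.trans_le (le_abs_self _)
      · have : (k : ℤ) + (t : ℤ) * r < -(j - r + ((j' : ℕ) : ℤ)) := by linarith
        exact this.trans_le (neg_le_abs _)
  -- ### Step 4: tail periodicity
  have tailper : ∀ (x : ℤ → A) (n : ℕ) (j : ℤ), (K : ℤ) < |j| →
      H^[n + q + p] x j = H^[n + q] x j := by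
    intro x n j hj
    rw [hK] at hj
    push_cast at hj
    have hKj : (k : ℤ) + ((q + p : ℕ) : ℤ) * (r : ℤ) < |j| := by push_cast; linarith
    have hqj : (k : ℤ) + (q : ℤ) * (r : ℤ) < |j| := by
      have h1 : (0 : ℤ) ≤ (p : ℤ) * r := by positivity
      nlinarith [hj]
    calc H^[n + q + p] x j = H^[(q + p) + n] x j := by
          rw [show n + q + p = (q + p) + n from by ring]
      _ = H^[q + p] (H^[n] x) j := by rw [Function.iterate_add_apply]
      _ = F^[q + p] (H^[n] x) j := cone (q + p) _ j hKj
      _ = F^[q] (H^[n] x) j := by rw [hqp]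
      _ = H^[q] (H^[n] x) j := (cone q _ j hqj).symm
      _ = H^[q + n] x j := by rw [← Function.iterate_add_apply]
      _ = H^[n + q] x j := by rw [Nat.add_comm]
  have tailper' : ∀ (m : ℕ) (x : ℤ → A) (j : ℤ), (K : ℤ) < |j| → ∀ n : ℕ,
      H^[n + q + m * p] x j = H^[n + q] x j := by
    intro m
    induction m with
    | zero => intro x j hj n; simp
    | succ m ih =>
      intro x j hj n
      rw [show n + q + (m + 1) * p = (n + p) + q + m * p from by ring, ih x j hj (n + p),
        show n + p + q = n + q + p from by ring]
      exact tailper x n j hj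
  -- ### Step 5: update lemma — central cells depend only on the window [-L, L]
  have hRρ : ∀ i : ℤ, |i| ≤ (k : ℤ) → ρ i ≤ R := by
    intro i hi
    obtain ⟨h1, h2⟩ := abs_le.mp hi
    have hmem : i ∈ Finset.Icc (-(k : ℤ)) (k : ℤ) := Finset.mem_Icc.mpr ⟨h1, h2⟩
    rw [hR]
    exact le_trans (Finset.le_sup hmem) (le_max_right _ _)
  have hKL : (k : ℤ) + (R : ℤ) ≤ (L : ℤ) := by
    rw [hL, hK]
    push_cast
    have : (0 : ℤ) ≤ ((q : ℤ) + p) * r := by positivity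
    linarith
  have hKL2 : (K : ℤ) + (R : ℤ) ≤ (L : ℤ) := by rw [hL]; push_cast; linarith
  have hrR : (r : ℤ) ≤ (R : ℤ) := by rw [hR]; exact_mod_cast le_max_left _ _
  have hupd : ∀ y z : ℤ → A, (∀ t : ℤ, |t| ≤ (L : ℤ) → y t = z t) →
      ∀ i : ℤ, |i| ≤ (K : ℤ) → H y i = H z i := by
    intro y z hyz i hi
    rcases le_or_gt |i| (k : ℤ) with hik | hik
    · rw [hh y i, hh z i]
      congr 1
      funext j
      apply hyz
      obtain ⟨h1, h2⟩ := abs_le.mp hik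
      have h3 : ((ρ i : ℕ) : ℤ) ≤ (R : ℤ) := by exact_mod_cast hRρ i hik
      have hj1 : (0 : ℤ) ≤ ((j : ℕ) : ℤ) := by positivity
      have hj2 : ((j : ℕ) : ℤ) ≤ 2 * ((ρ i : ℕ) : ℤ) := by exact_mod_cast Nat.le_of_lt_succ j.isLt
      rw [abs_le]
      constructor <;> linarith
    · rw [hdef y i hik, hdef z i hik]
      congr 1
      funext j
      apply hyz
      obtain ⟨h1, h2⟩ := abs_le.mp hi
      have hj1 : (0 : ℤ) ≤ ((j : ℕ) : ℤ) := by positivity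
      have hj2 : ((j : ℕ) : ℤ) ≤ 2 * (r : ℤ) := by exact_mod_cast Nat.le_of_lt_succ j.isLt
      rw [abs_le]
      constructor <;> linarith
  -- ### Step 6: the finite dynamical system on central windows
  obtain ⟨T, hT⟩ : ∃ T, T = theta H K L p hp0 := ⟨_, rfl⟩
  have key : ∀ (x : ℤ → A) (n : ℕ),
      T^[n] (fun (a : Fin p) (j : Fin (2 * L + 1)) => H^[q + (a : ℕ)] x (((j : ℕ) : ℤ) - (L : ℤ)))
        = fun (a : Fin p) (j : Fin (2 * L + 1)) => H^[q + n + (a : ℕ)] x (((j : ℕ) : ℤ) - (L : ℤ)) := by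
    intro x n
    induction n with
    | zero => simp
    | succ n ih =>
      rw [Function.iterate_succ_apply', ih, hT]
      funext a j
      show theta H K L p hp0 _ a j = _
      rw [theta]
      by_cases ha : (a : ℕ) + 1 < p
      · rw [dif_pos ha]
        show H^[q + n + ((a : ℕ) + 1)] x _ = H^[q + (n + 1) + (a : ℕ)] x _
        rw [show q + n + ((a : ℕ) + 1) = q + (n + 1) + (a : ℕ) from by ring]
      · rw [dif_neg ha]
        have hap : (a : ℕ) = p - 1 := by have := a.isLt; omega
        by_cases hj : |((j : ℕ) : ℤ) - (L : ℤ)| ≤ (K : ℤ)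
        · rw [if_pos hj]
          show H (extWin L (fun j' : Fin (2 * L + 1) =>
              H^[q + n + (p - 1)] x (((j' : ℕ) : ℤ) - (L : ℤ)))) _ = _
          rw [hupd _ (H^[q + n + (p - 1)] x)
            (fun t ht => extWin_spec L (H^[q + n + (p - 1)] x) t ht) _ hj,
            ← Function.iterate_succ_apply' H]
          rw [hap, show Nat.succ (q + n + (p - 1)) = q + (n + 1) + (p - 1) from by omega]
        · rw [if_neg hj]
          show H^[q + n + 0] x (((j : ℕ) : ℤ) - (L : ℤ)) = H^[q + (n + 1) + (a : ℕ)] x _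
          rw [hap, show q + (n + 1) + (p - 1) = n + q + p from by omega,
            show q + n + 0 = n + q from by ring]
          have hjK : (K : ℤ) < |((j : ℕ) : ℤ) - (L : ℤ)| := lt_of_not_ge hj
          exact (tailper x n _ hjK).symm
  -- ### Step 7: conclusion
  obtain ⟨N, hN⟩ : ∃ N, N = Fintype.card (Fin p → Fin (2 * L + 1) → A) := ⟨_, rfl⟩
  refine ⟨q + N, p * Nat.factorial N, Nat.one_le_iff_ne_zero.mpr (by positivity), ?_⟩
  funext x t
  rcases le_or_gt |t| (K : ℤ) with htK | htK
  · -- central zone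
    have htL : |t| ≤ (L : ℤ) := by
      have : (0 : ℤ) ≤ (R : ℤ) := by positivity
      linarith
    obtain ⟨h1, h2⟩ := abs_le.mp htL
    have hjlt : (t + (L : ℤ)).toNat < 2 * L + 1 := by omega
    have e3 : T^[N + p * Nat.factorial N]
          (fun (a : Fin p) (j : Fin (2 * L + 1)) => H^[q + (a : ℕ)] x (((j : ℕ) : ℤ) - (L : ℤ)))
        = T^[N] (fun (a : Fin p) (j : Fin (2 * L + 1)) => H^[q + (a : ℕ)] x (((j : ℕ) : ℤ) - (L : ℤ))) := by
      rw [hN]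
      exact iter_stab _ _ (by rw [← hN]; exact dvd_mul_left _ _) _
    rw [key x (N + p * Nat.factorial N), key x N] at e3
    have e := congrFun (congrFun e3 ⟨0, hp0⟩) ⟨(t + (L : ℤ)).toNat, hjlt⟩
    simp only at e
    have hjval : ((((⟨(t + (L : ℤ)).toNat, hjlt⟩ : Fin (2 * L + 1)) : ℕ)) : ℤ) - (L : ℤ) = t := by
      show (((t + (L : ℤ)).toNat : ℕ) : ℤ) - (L : ℤ) = t
      omega
    rw [hjval] at e
    rw [show q + N + p * Nat.factorial N = q + (N + p * Nat.factorial N) + 0 from by ring,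
      show q + N = q + N + 0 from by ring]
    exact e
  · -- tail zone
    calc H^[q + N + p * Nat.factorial N] x t
        = H^[N + q + Nat.factorial N * p] x t := by
          rw [show q + N + p * Nat.factorial N = N + q + Nat.factorial N * p from by ring]
      _ = H^[N + q] x t := tailper' (Nat.factorial N) x t htK N
      _ = H^[q + N] x t := by rw [Nat.add_comm]
end

section
/- Let H be a d-ν-CA with default rule f such that H is ultimately periodic (H^{q+p} = H^q for some q ≥ 0, p ≥ 1). Then the CA F with local rule f is equicontinuous. -/
/-- Light-cone lemma: `F^[n] x i` depends only on `x` on `[i - n r, i + n r]`. -/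
lemma stmt13_cone {A : Type} (r : ℕ) (f : (Fin (2 * r + 1) → A) → A)
    (F : (ℤ → A) → (ℤ → A))
    (hF : ∀ (x : ℤ → A) (i : ℤ),
      F x i = f (fun j => x (i - (r : ℤ) + ((j : ℕ) : ℤ)))) :
    ∀ (n : ℕ) (x y : ℤ → A) (i : ℤ),
      (∀ j : ℤ, |j - i| ≤ (n : ℤ) * r → x j = y j) →
      F^[n] x i = F^[n] y i := by
  intro n
  induction n with
  | zero => intro x y i h; simpa using h i (by simp)
  | succ n ih =>
    intro x y i h
    rw [Function.iterate_succ_apply', Function.iterate_succ_apply', hF, hF]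
    congr 1
    funext j
    apply ih
    intro j' hj'
    apply h
    have hjle : ((j : ℕ) : ℤ) ≤ 2 * r := by exact_mod_cast Nat.le_of_lt_succ j.isLt
    have hjpos : (0 : ℤ) ≤ ((j : ℕ) : ℤ) := Int.natCast_nonneg _
    rw [abs_le] at hj' ⊢
    push_cast
    have hexp : ((n : ℤ) + 1) * r = (n : ℤ) * r + r := by ring
    omega

/-- `F` commutes with shifts. -/
lemma stmt13_shift {A : Type} (r : ℕ) (f : (Fin (2 * r + 1) → A) → A)
    (F : (ℤ → A) → (ℤ → A))
    (hF : ∀ (x : ℤ → A) (i : ℤ),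
      F x i = f (fun j => x (i - (r : ℤ) + ((j : ℕ) : ℤ)))) :
    ∀ (n : ℕ) (t : ℤ) (x : ℤ → A) (i : ℤ),
      F^[n] (fun j => x (j + t)) i = F^[n] x (i + t) := by
  intro n
  induction n with
  | zero => intro t x i; rfl
  | succ n ih =>
    intro t x i
    rw [Function.iterate_succ_apply', Function.iterate_succ_apply', hF, hF]
    congr 1
    funext j
    rw [ih]
    congr 1
    ring

/-- Far from the origin, `H^[n]` agrees with `F^[n]`. -/
lemma stmt13_far {A : Type} (r : ℕ) (f : (Fin (2 * r + 1) → A) → A)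
    (F : (ℤ → A) → (ℤ → A))
    (hF : ∀ (x : ℤ → A) (i : ℤ),
      F x i = f (fun j => x (i - (r : ℤ) + ((j : ℕ) : ℤ))))
    (H : (ℤ → A) → (ℤ → A)) (k : ℕ)
    (hdef : ∀ (x : ℤ → A) (i : ℤ), (k : ℤ) < |i| →
      H x i = f (fun j => x (i - (r : ℤ) + ((j : ℕ) : ℤ)))) :
    ∀ (n : ℕ) (y : ℤ → A) (j : ℤ), (k : ℤ) + (n : ℤ) * r < |j| →
      H^[n] y j = F^[n] y j := by
  intro n
  induction n with
  | zero => intro y j _; rfl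
  | succ n ih =>
    intro y j hj
    have hk : (k : ℤ) < |j| := by
      have h0 : (0 : ℤ) ≤ ((n : ℤ) + 1) * r := by positivity
      push_cast at hj; nlinarith
    rw [Function.iterate_succ_apply', Function.iterate_succ_apply',
      hdef _ _ hk, hF]
    congr 1
    funext jv
    apply ih
    have hjle : ((jv : ℕ) : ℤ) ≤ 2 * r := by exact_mod_cast Nat.le_of_lt_succ jv.isLt
    have hjpos : (0 : ℤ) ≤ ((jv : ℕ) : ℤ) := Int.natCast_nonneg _
    push_cast at hj ⊢
    have hexp : ((n : ℤ) + 1) * r = (n : ℤ) * r + r := by ring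
    rw [lt_abs]
    rcases abs_cases j with ⟨h1, h2⟩ | ⟨h1, h2⟩ <;> rw [h1] at hj <;> omega

/-- Let `H` be a d-ν-CA with default rule `f` (of radius `r`) which is ultimately
periodic (`H^{q+p} = H^q`, `p ≥ 1`). Then the CA `F` with local rule `f` is
equicontinuous (stated in the Cantor metric: points agreeing on a large central
window have all iterates agreeing on a given central window). -/
theorem stmt_13 {A : Type} [Fintype A] [Nonempty A]
    (r : ℕ)
    (f : (Fin (2 * r + 1) → A) → A)
    (F : (ℤ → A) → (ℤ → A))
    (hF : ∀ (x : ℤ → A) (i : ℤ),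
      F x i = f (fun j => x (i - (r : ℤ) + ((j : ℕ) : ℤ))))
    (H : (ℤ → A) → (ℤ → A))
    (hnu : ∃ (ρ : ℤ → ℕ) (h : ∀ i : ℤ, (Fin (2 * ρ i + 1) → A) → A),
      ∀ (x : ℤ → A) (i : ℤ),
        H x i = h i (fun j => x (i - (ρ i : ℤ) + ((j : ℕ) : ℤ))))
    (k : ℕ)
    (hdef : ∀ (x : ℤ → A) (i : ℤ), (k : ℤ) < |i| →
      H x i = f (fun j => x (i - (r : ℤ) + ((j : ℕ) : ℤ))))
    (q p : ℕ) (hp : 1 ≤ p) (hper : H^[q + p] = H^[q]) :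
    ∀ m : ℕ, ∃ M : ℕ, ∀ x y : ℤ → A,
      (∀ i : ℤ, |i| ≤ (M : ℤ) → x i = y i) →
      ∀ (n : ℕ) (i : ℤ), |i| ≤ (m : ℤ) → F^[n] x i = F^[n] y i := by
  -- Step 1: F is ultimately periodic.
  have hFper : F^[q + p] = F^[q] := by
    funext x i
    set T : ℤ := (k : ℤ) + ((q + p : ℕ) : ℤ) * r + 1 + |i| with hT
    have hbig : (k : ℤ) + ((q + p : ℕ) : ℤ) * r < |i + T| := by
      have h1 : -|i| ≤ i := neg_abs_le i
      have h2 : i + T ≤ |i + T| := le_abs_self _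
      omega
    have hbig' : (k : ℤ) + (q : ℕ) * r < |i + T| := by
      have : ((q : ℕ) : ℤ) * r ≤ ((q + p : ℕ) : ℤ) * r := by
        have : ((q : ℕ) : ℤ) ≤ ((q + p : ℕ) : ℤ) := by push_cast; omega
        exact mul_le_mul_of_nonneg_right this (Int.natCast_nonneg r)
      omega
    have hs := stmt13_shift r f F hF
    have hfar := stmt13_far r f F hF H k hdef
    calc F^[q + p] x i
        = F^[q + p] (fun j => x (j + -T)) (i + T) := by
          rw [hs (q + p) (-T) x (i + T)]; ring_nf
      _ = H^[q + p] (fun j => x (j + -T)) (i + T) := (hfar _ _ _ hbig).symm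
      _ = H^[q] (fun j => x (j + -T)) (i + T) := by rw [hper]
      _ = F^[q] (fun j => x (j + -T)) (i + T) := hfar _ _ _ hbig'
      _ = F^[q] x i := by rw [hs q (-T) x (i + T)]; ring_nf
  -- Step 2: every iterate equals an iterate of exponent < q + p.
  have hred : ∀ n : ℕ, ∃ n' : ℕ, n' < q + p ∧ F^[n] = F^[n'] := by
    intro n
    induction n using Nat.strong_induction_on with
    | _ n ih =>
      by_cases hn : n < q + p
      · exact ⟨n, hn, rfl⟩
      · push_neg at hn
        have hdecomp : n = (n - (q + p)) + (q + p) := by omega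
        have : F^[n] = F^[(n - (q + p)) + q] := by
          conv_lhs => rw [hdecomp]
          rw [Function.iterate_add F (n - (q + p)) (q + p), hFper,
            ← Function.iterate_add F (n - (q + p)) q]
        obtain ⟨n', hn', heq⟩ := ih ((n - (q + p)) + q) (by omega)
        exact ⟨n', hn', this.trans heq⟩
  -- Step 3: conclude with the light-cone lemma.
  intro m
  refine ⟨m + (q + p) * r, ?_⟩
  intro x y hxy n i hi
  obtain ⟨n', hn', heq⟩ := hred n
  rw [heq]
  apply stmt13_cone r f F hF
  intro j hj
  apply hxy
  have h1 : |j| ≤ |j - i| + |i| := by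
    calc |j| = |(j - i) + i| := by ring_nf
      _ ≤ |j - i| + |i| := abs_add_le _ _
  have h2 : ((n' : ℕ) : ℤ) * r ≤ ((q + p : ℕ) : ℤ) * r := by
    have : ((n' : ℕ) : ℤ) ≤ ((q + p : ℕ) : ℤ) := by push_cast; omega
    exact mul_le_mul_of_nonneg_right this (Int.natCast_nonneg r)
  push_cast at *
  omega
end

section
/- Let F be a CA with local rule f of radius r admitting a strongly r-blocking word u, and let H be an r-ν-CA of radius r that is |u|-compatible with f. Then H is almost equicontinuous: the set of equicontinuity points of H is residual (contains a dense Gδ set) in A^ℤ. -/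
lemma conj_iter {A : Type} (H : (ℤ → A) → (ℤ → A)) (p : ℤ) (n : ℕ) (z : ℤ → A) :
    (fun w : ℤ → A => fun i => H (fun j => w (j - p)) (i + p))^[n] z
      = fun i => H^[n] (fun j => z (j - p)) (i + p) := by
  induction n generalizing z with
  | zero => funext i; simp
  | succ n ih =>
    rw [Function.iterate_succ_apply, ih]
    funext i
    rw [Function.iterate_succ_apply]
    have : (fun j => H (fun t => z (t - p)) (j - p + p)) = H (fun t => z (t - p)) := by
      funext j; simp
    simp only [this]

/-- Shifted blocking: if the rule is `f` on `[p, p+l)` and both `x` and `y` carry the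
blocking word `u` at position `p`, then the orbits agree on `[p+d, p+d+r)` forever. -/
lemma shifted_block {A : Type}
    (r : ℕ) (f : (Fin (2 * r + 1) → A) → A)
    (l : ℕ) (u : ℕ → A) (d : ℕ)
    (hbl : ∀ H' : (ℤ → A) → (ℤ → A),
        (∃ (ρ : ℤ → ℕ) (h' : ∀ i : ℤ, (Fin (2 * ρ i + 1) → A) → A),
          ∀ (x : ℤ → A) (i : ℤ),
            H' x i = h' i (fun j => x (i - (ρ i : ℤ) + ((j : ℕ) : ℤ)))) →
        (∀ (x : ℤ → A) (i : ℤ), 0 ≤ i → i < (l : ℤ) →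
          H' x i = f (fun j => x (i - (r : ℤ) + ((j : ℕ) : ℤ)))) →
        ∀ x y : ℤ → A,
          (∀ j : ℕ, j < l → x (j : ℤ) = u j) →
          (∀ j : ℕ, j < l → y (j : ℤ) = u j) →
          ∀ (n : ℕ) (i : ℤ), (d : ℤ) ≤ i → i < ((d + r : ℕ) : ℤ) →
            H'^[n] x i = H'^[n] y i)
    (h : ℤ → (Fin (2 * r + 1) → A) → A)
    (H : (ℤ → A) → (ℤ → A))
    (hH : ∀ (x : ℤ → A) (i : ℤ),
      H x i = h i (fun j => x (i - (r : ℤ) + ((j : ℕ) : ℤ))))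
    (p : ℤ) (hp : ∀ i : ℤ, p ≤ i → i < p + l → h i = f)
    (x y : ℤ → A)
    (hx : ∀ j : ℕ, j < l → x (p + (j : ℤ)) = u j)
    (hy : ∀ j : ℕ, j < l → y (p + (j : ℤ)) = u j) :
    ∀ (n : ℕ) (i : ℤ), p + (d : ℤ) ≤ i → i < p + (d : ℤ) + (r : ℤ) →
      H^[n] x i = H^[n] y i := by
  set H' : (ℤ → A) → (ℤ → A) := fun w => fun i => H (fun j => w (j - p)) (i + p) with hH'
  have key : ∀ (z : ℤ → A) (i : ℤ),
      H' z i = h (i + p) (fun j => z (i - (r : ℤ) + ((j : ℕ) : ℤ))) := by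
    intro z i
    show H (fun j => z (j - p)) (i + p) = _
    rw [hH]
    congr 1
    funext j
    congr 1
    ring
  have h1 : ∃ (ρ : ℤ → ℕ) (h' : ∀ i : ℤ, (Fin (2 * ρ i + 1) → A) → A),
      ∀ (z : ℤ → A) (i : ℤ),
        H' z i = h' i (fun j => z (i - (ρ i : ℤ) + ((j : ℕ) : ℤ))) :=
    ⟨fun _ => r, fun i => h (i + p), key⟩
  have h2 : ∀ (z : ℤ → A) (i : ℤ), 0 ≤ i → i < (l : ℤ) →
      H' z i = f (fun j => z (i - (r : ℤ) + ((j : ℕ) : ℤ))) := by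
    intro z i hi0 hil
    rw [key, hp (i + p) (by omega) (by omega)]
  have hx' : ∀ j : ℕ, j < l → (fun t : ℤ => x (t + p)) (j : ℤ) = u j := by
    intro j hj; simpa [add_comm] using hx j hj
  have hy' : ∀ j : ℕ, j < l → (fun t : ℤ => y (t + p)) (j : ℤ) = u j := by
    intro j hj; simpa [add_comm] using hy j hj
  have main := hbl H' h1 h2 (fun t => x (t + p)) (fun t => y (t + p)) hx' hy'
  intro n i hi1 hi2
  have := main n (i - p) (by omega) (by push_cast; omega)
  rw [show H' = fun w : ℤ → A => fun i => H (fun j => w (j - p)) (i + p) from rfl,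
    conj_iter, conj_iter] at this
  simpa using this

/-- Two walls trap the middle: if orbits agree on walls `[a, a+r)` and `[b, b+r)`
forever, and initially on `[a, b+r)`, then they agree on `[a, b+r)` forever. -/
lemma walls_trap {A : Type}
    (r : ℕ) (h : ℤ → (Fin (2 * r + 1) → A) → A)
    (H : (ℤ → A) → (ℤ → A))
    (hH : ∀ (x : ℤ → A) (i : ℤ),
      H x i = h i (fun j => x (i - (r : ℤ) + ((j : ℕ) : ℤ))))
    (a b : ℤ) (x y : ℤ → A)
    (hL : ∀ (n : ℕ) (i : ℤ), a ≤ i → i < a + r → H^[n] x i = H^[n] y i)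
    (hR : ∀ (n : ℕ) (i : ℤ), b ≤ i → i < b + r → H^[n] x i = H^[n] y i)
    (h0 : ∀ i : ℤ, a ≤ i → i < b + r → x i = y i) :
    ∀ (n : ℕ) (i : ℤ), a ≤ i → i < b + r → H^[n] x i = H^[n] y i := by
  intro n
  induction n with
  | zero => simpa using h0
  | succ n ih =>
    intro i hi1 hi2
    by_cases hL' : i < a + r
    · exact hL (n + 1) i hi1 hL'
    by_cases hR' : b ≤ i
    · exact hR (n + 1) i hR' hi2
    push_neg at hL' hR'
    rw [Function.iterate_succ_apply', Function.iterate_succ_apply', hH, hH]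
    congr 1
    funext j
    have hj : ((j : ℕ) : ℤ) ≤ 2 * r := by exact_mod_cast Nat.le_of_lt_succ j.2
    exact ih (i - r + j) (by omega) (by omega)

/-- Cylinders form a neighborhood basis in `ℤ → A` with `A` discrete. -/
lemma cylinder_basis {A : Type} [TopologicalSpace A] [DiscreteTopology A]
    (x : ℤ → A) (U : Set (ℤ → A)) (hU : U ∈ nhds x) :
    ∃ k : ℕ, {y : ℤ → A | ∀ i : ℤ, |i| ≤ (k : ℤ) → y i = x i} ⊆ U := by
  rw [nhds_pi, Filter.mem_pi] at hU
  obtain ⟨I, hIfin, t, ht, hsub⟩ := hU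
  obtain ⟨k, hk⟩ : ∃ k : ℕ, ∀ i ∈ I, |i| ≤ (k : ℤ) := by
    refine ⟨hIfin.toFinset.sup fun i => i.natAbs, fun i hi => ?_⟩
    have h2 : i.natAbs ≤ hIfin.toFinset.sup (fun i => i.natAbs) :=
      Finset.le_sup (f := fun i : ℤ => i.natAbs) (hIfin.mem_toFinset.mpr hi)
    rw [Int.abs_eq_natAbs]; omega
  refine ⟨k, fun y hy => hsub fun i hi => ?_⟩
  rw [hy i (hk i hi)]
  exact mem_of_mem_nhds (ht i)

/-- A cylinder is a neighborhood. -/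
lemma cylinder_mem_nhds {A : Type} [TopologicalSpace A] [DiscreteTopology A]
    (x : ℤ → A) (M : ℕ) :
    {y : ℤ → A | ∀ i : ℤ, |i| ≤ (M : ℤ) → y i = x i} ∈ nhds x := by
  have : {y : ℤ → A | ∀ i : ℤ, |i| ≤ (M : ℤ) → y i = x i}
      = ⋂ i ∈ Finset.Icc (-(M : ℤ)) M, {y : ℤ → A | y i = x i} := by
    ext y
    simp only [Set.mem_setOf_eq, Set.mem_iInter, Finset.mem_Icc]
    constructor
    · intro hy i hi; exact hy i (by rw [abs_le]; omega)
    · intro hy i hi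
      rw [abs_le] at hi
      exact hy i ⟨by omega, by omega⟩
  rw [this]
  refine (Filter.biInter_finset_mem _).mpr fun i _ => ?_
  have : IsOpen ((fun y : ℤ → A => y i) ⁻¹' {x i}) :=
    (isOpen_discrete ({x i} : Set A)).preimage (continuous_apply i)
  exact this.mem_nhds rfl



/-- Let `F` be a CA with rule `f` of radius `r` admitting a strongly `r`-blocking word
`u` (of length `l`, with some offset `d`), and let `H` be an r-ν-CA of radius `r`
which is `|u|`-compatible with `f`. Then `H` is almost equicontinuous: its set of
equicontinuity points is residual in `A^ℤ`. -/
theorem stmt_14 {A : Type} [Fintype A] [Nonempty A]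
    [TopologicalSpace A] [DiscreteTopology A]
    (r : ℕ)
    (f : (Fin (2 * r + 1) → A) → A)
    (F : (ℤ → A) → (ℤ → A))
    (hF : ∀ (x : ℤ → A) (i : ℤ),
      F x i = f (fun j => x (i - (r : ℤ) + ((j : ℕ) : ℤ))))
    (l : ℕ) (u : ℕ → A)
    -- `u` (of length `l`) is strongly `r`-blocking for `F` with offset `d`:
    (hblock : ∃ d : ℕ, d + r ≤ l ∧
      ∀ H' : (ℤ → A) → (ℤ → A),
        (∃ (ρ : ℤ → ℕ) (h' : ∀ i : ℤ, (Fin (2 * ρ i + 1) → A) → A),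
          ∀ (x : ℤ → A) (i : ℤ),
            H' x i = h' i (fun j => x (i - (ρ i : ℤ) + ((j : ℕ) : ℤ)))) →
        (∀ (x : ℤ → A) (i : ℤ), 0 ≤ i → i < (l : ℤ) →
          H' x i = f (fun j => x (i - (r : ℤ) + ((j : ℕ) : ℤ)))) →
        ∀ x y : ℤ → A,
          (∀ j : ℕ, j < l → x (j : ℤ) = u j) →
          (∀ j : ℕ, j < l → y (j : ℤ) = u j) →
          ∀ (n : ℕ) (i : ℤ), (d : ℤ) ≤ i → i < ((d + r : ℕ) : ℤ) →
            H'^[n] x i = H'^[n] y i)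
    (h : ℤ → (Fin (2 * r + 1) → A) → A)
    (H : (ℤ → A) → (ℤ → A))
    (hH : ∀ (x : ℤ → A) (i : ℤ),
      H x i = h i (fun j => x (i - (r : ℤ) + ((j : ℕ) : ℤ))))
    -- `H` is `l`-compatible with `f`:
    (hcomp : ∀ k : ℕ, ∃ k₁ k₂ : ℤ, (k : ℤ) < k₁ ∧ k₂ < -(k : ℤ) ∧
      ∀ i : ℤ, ((k₁ ≤ i ∧ i < k₁ + l) ∨ (k₂ ≤ i ∧ i < k₂ + l)) → h i = f) :
    {x : ℤ → A | ∀ m : ℕ, ∃ M : ℕ, ∀ y : ℤ → A,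
      (∀ i : ℤ, |i| ≤ (M : ℤ) → x i = y i) →
      ∀ (n : ℕ) (i : ℤ), |i| ≤ (m : ℤ) → H^[n] x i = H^[n] y i}
      ∈ residual (ℤ → A) := by
  obtain ⟨d, hd, hbl⟩ := hblock
  set V : ℕ → Set (ℤ → A) := fun m =>
    {x : ℤ → A | ∃ M : ℕ, ∀ y : ℤ → A,
      (∀ i : ℤ, |i| ≤ (M : ℤ) → x i = y i) →
      ∀ (n : ℕ) (i : ℤ), |i| ≤ (m : ℤ) → H^[n] x i = H^[n] y i} with hV
  have hEq : {x : ℤ → A | ∀ m : ℕ, ∃ M : ℕ, ∀ y : ℤ → A,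
      (∀ i : ℤ, |i| ≤ (M : ℤ) → x i = y i) →
      ∀ (n : ℕ) (i : ℤ), |i| ≤ (m : ℤ) → H^[n] x i = H^[n] y i}
      = ⋂ m : ℕ, V m := by
    ext x
    simp [hV, Set.mem_iInter]
  rw [hEq]
  refine (countable_iInter_mem).mpr fun m => ?_
  refine residual_of_dense_open ?_ ?_
  · -- openness
    rw [isOpen_iff_mem_nhds]
    rintro x ⟨M, hM⟩
    refine Filter.mem_of_superset (cylinder_mem_nhds x M) ?_
    intro y hy
    refine ⟨M, fun z hz n i hi => ?_⟩
    have h1 : H^[n] x i = H^[n] y i :=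
      hM y (fun i hi => (hy i hi).symm) n i hi
    have h2 : H^[n] x i = H^[n] z i :=
      hM z (fun i hi => (hy i hi).symm.trans (hz i hi)) n i hi
    exact h1.symm.trans h2
  · -- density
    intro x
    rw [mem_closure_iff_nhds]
    intro U hU
    obtain ⟨k, hk⟩ := cylinder_basis x U hU
    set K : ℕ := max k m + l with hK
    obtain ⟨k₁, k₂, hk₁, hk₂, hrule⟩ := hcomp K
    have hKk : k + l ≤ K := by have := Nat.le_max_left k m; omega
    have hKm : m + l ≤ K := by have := Nat.le_max_right k m; omega
    set x' : ℤ → A := fun i =>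
      if k₁ ≤ i ∧ i < k₁ + (l : ℤ) then u (i - k₁).toNat
      else if k₂ ≤ i ∧ i < k₂ + (l : ℤ) then u (i - k₂).toNat
      else x i with hx'
    have hx'x : ∀ i : ℤ, |i| ≤ (k : ℤ) → x' i = x i := by
      intro i hi
      rw [abs_le] at hi
      show (if _ then _ else _) = x i
      rw [if_neg (by omega), if_neg (by omega)]
    have hx'1 : ∀ j : ℕ, j < l → x' (k₁ + (j : ℤ)) = u j := by
      intro j hj
      show (if _ then _ else _) = u j
      rw [if_pos ⟨by omega, by omega⟩]
      congr 1
      omega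
    have hx'2 : ∀ j : ℕ, j < l → x' (k₂ + (j : ℤ)) = u j := by
      intro j hj
      show (if _ then _ else _) = u j
      rw [if_neg (by omega), if_pos ⟨by omega, by omega⟩]
      congr 1
      omega
    refine ⟨x', hk fun i hi => hx'x i hi, ?_⟩
    refine ⟨(k₁ + (l : ℤ) - k₂).toNat, fun y hy n i hi => ?_⟩
    have hMval : (((k₁ + (l : ℤ) - k₂).toNat : ℤ)) = k₁ + (l : ℤ) - k₂ :=
      Int.toNat_of_nonneg (by omega)
    have hagree : ∀ i : ℤ, k₂ ≤ i → i < k₁ + (l : ℤ) → x' i = y i := by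
      intro i hi1 hi2
      refine hy i ?_
      rw [abs_le, hMval]
      omega
    have hy1 : ∀ j : ℕ, j < l → y (k₁ + (j : ℤ)) = u j := by
      intro j hj
      rw [← hagree (k₁ + j) (by omega) (by omega)]
      exact hx'1 j hj
    have hy2 : ∀ j : ℕ, j < l → y (k₂ + (j : ℤ)) = u j := by
      intro j hj
      rw [← hagree (k₂ + j) (by omega) (by omega)]
      exact hx'2 j hj
    have wallR := shifted_block r f l u d hbl h H hH k₁
      (fun i h1 h2 => hrule i (Or.inl ⟨h1, h2⟩)) x' y hx'1 hy1
    have wallL := shifted_block r f l u d hbl h H hH k₂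
      (fun i h1 h2 => hrule i (Or.inr ⟨h1, h2⟩)) x' y hx'2 hy2
    have trap := walls_trap r h H hH (k₂ + d) (k₁ + d) x' y
      (fun n i h1 h2 => wallL n i h1 (by push_cast at h2 ⊢; omega))
      (fun n i h1 h2 => wallR n i h1 (by push_cast at h2 ⊢; omega))
      (fun i h1 h2 => hagree i (by omega) (by push_cast at h2 ⊢; omega))
    rw [abs_le] at hi
    exact trap n i (by omega) (by push_cast; omega)
end

section
/- Let A = {0,1,2} and let f : A³ → A be defined by: f(x,0,y) = 1 if x=1 or y=1, else 0; f(x,1,y) = 2 if x=2 or y=2, else 1; f(x,2,y) = 0 if x=1 or y=1, else 2. Then the word 202 is 1-blocking for the CA F with local rule f; consequently F is almost equicontinuous (not sensitive). -/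
/-- The local rule of the almost equicontinuous CA example on `A = {0,1,2}`. -/
def fRule15 (x y z : Fin 3) : Fin 3 :=
  if y = 0 then (if x = 1 ∨ z = 1 then 1 else 0)
  else if y = 1 then (if x = 2 ∨ z = 2 then 2 else 1)
  else (if x = 1 ∨ z = 1 then 0 else 2)

/-- Invariant: the run of zeros containing `c` is bordered by `2`s. -/
def Inv15 (c : ℤ) (x : ℤ → Fin 3) : Prop :=
  (∃ j : ℤ, j ≤ c - 1 ∧ x j = 2 ∧ ∀ i : ℤ, j < i → i ≤ c → x i = 0) ∧
  (∃ j : ℤ, c + 1 ≤ j ∧ x j = 2 ∧ ∀ i : ℤ, c ≤ i → i < j → x i = 0)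

lemma rule_zero : ∀ a b : Fin 3, a ≠ 1 → b ≠ 1 → fRule15 a 0 b = 0 := by decide

lemma rule_two_keep : ∀ a : Fin 3, a ≠ 1 → fRule15 a 2 0 = 2 := by decide
lemma rule_two_keep' : ∀ a : Fin 3, a ≠ 1 → fRule15 0 2 a = 2 := by decide
lemma rule_one_two : ∀ a : Fin 3, fRule15 a 1 2 = 2 := by decide
lemma rule_one_two' : ∀ a : Fin 3, fRule15 2 1 a = 2 := by decide
lemma rule_two_die : ∀ a : Fin 3, fRule15 1 2 a = 0 := by decide
lemma rule_two_die' : ∀ a : Fin 3, fRule15 a 2 1 = 0 := by decide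

lemma inv_step {F : (ℤ → Fin 3) → (ℤ → Fin 3)}
    (hF : ∀ (x : ℤ → Fin 3) (i : ℤ),
      F x i = fRule15 (x (i - 1)) (x i) (x (i + 1)))
    (c : ℤ) (x : ℤ → Fin 3) (h : Inv15 c x) : Inv15 c (F x) := by
  obtain ⟨⟨j, hj, hj2, hz⟩, ⟨k, hk, hk2, hzk⟩⟩ := h
  have two_ne : (2 : Fin 3) ≠ 1 := by decide
  have zero_ne : (0 : Fin 3) ≠ 1 := by decide
  -- values near the run are never 1
  have hne : ∀ i : ℤ, j ≤ i → i ≤ k → x i ≠ 1 := by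
    intro i h1 h2
    rcases eq_or_lt_of_le h1 with h1 | h1
    · rw [← h1, hj2]; exact two_ne
    rcases eq_or_lt_of_le h2 with h2 | h2
    · rw [h2, hk2]; exact two_ne
    rcases le_or_gt i c with h3 | h3
    · rw [hz i h1 h3]; exact zero_ne
    · rw [hzk i (by omega) h2]; exact zero_ne
  -- all the zeros stay zero
  have hz' : ∀ i : ℤ, j < i → i < k → F x i = 0 := by
    intro i h1 h2
    rw [hF]
    rcases le_or_gt i c with h3 | h3
    · rw [hz i h1 h3]
      exact rule_zero _ _ (hne _ (by omega) (by omega)) (hne _ (by omega) (by omega))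
    · rw [hzk i (by omega) h2]
      exact rule_zero _ _ (hne _ (by omega) (by omega)) (hne _ (by omega) (by omega))
  constructor
  · -- left border
    by_cases h1 : x (j - 1) = 1
    · refine ⟨j - 1, by omega, ?_, ?_⟩
      · rw [hF]
        have : j - 1 - 1 = j - 2 := by omega
        rw [this, h1]
        have : j - 1 + 1 = j := by omega
        rw [this, hj2]
        exact rule_one_two _
      · intro i hi1 hi2
        rcases eq_or_lt_of_le (show j ≤ i by omega) with h2 | h2
        · rw [hF, ← h2]
          have : j - 1 + 1 = j := by omega
          rw [hj2]
          have hji : x (j - 1) = 1 := h1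
          rw [hji]
          exact rule_two_die _
        · exact hz' i h2 (by omega)
    · refine ⟨j, hj, ?_, fun i hi1 hi2 => hz' i hi1 (by omega)⟩
      rw [hF, hj2, hz (j + 1) (by omega) (by omega)]
      exact rule_two_keep _ h1
  · -- right border
    by_cases h1 : x (k + 1) = 1
    · refine ⟨k + 1, by omega, ?_, ?_⟩
      · rw [hF]
        have : k + 1 - 1 = k := by omega
        rw [this, h1, hk2]
        exact rule_one_two' _
      · intro i hi1 hi2
        rcases eq_or_lt_of_le (show i ≤ k by omega) with h2 | h2
        · rw [hF, h2]
          have : k - 1 = k - 1 := rfl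
          rw [hk2]
          have : k + 1 = k + 1 := rfl
          rw [h1]
          exact rule_two_die' _
        · exact hz' i (by omega) h2
    · refine ⟨k, hk, ?_, fun i hi1 hi2 => hz' i (by omega) hi2⟩
      rw [hF, hk2, hzk (k - 1) (by omega) (by omega)]
      have : k - 1 + 1 = k := by omega
      rw [this, hk2] at *
      exact rule_two_keep' _ h1

lemma block15 {F : (ℤ → Fin 3) → (ℤ → Fin 3)}
    (hF : ∀ (x : ℤ → Fin 3) (i : ℤ),
      F x i = fRule15 (x (i - 1)) (x i) (x (i + 1)))
    (c : ℤ) (x : ℤ → Fin 3)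
    (h1 : x (c - 1) = 2) (h2 : x c = 0) (h3 : x (c + 1) = 2) :
    ∀ n : ℕ, F^[n] x c = 0 := by
  have key : ∀ n : ℕ, Inv15 c (F^[n] x) := by
    intro n
    induction n with
    | zero =>
      refine ⟨⟨c - 1, le_refl _, h1, ?_⟩, ⟨c + 1, le_refl _, h3, ?_⟩⟩
      · intro i hi1 hi2
        have : i = c := by omega
        rw [this]; exact h2
      · intro i hi1 hi2
        have : i = c := by omega
        rw [this]; exact h2
    | succ n ih =>
      rw [Function.iterate_succ_apply']
      exact inv_step hF c _ ih
  intro n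
  obtain ⟨⟨j, hj, _, hz⟩, _⟩ := key n
  exact hz c (by omega) (le_refl _)

lemma determ15 {F : (ℤ → Fin 3) → (ℤ → Fin 3)}
    (hF : ∀ (x : ℤ → Fin 3) (i : ℤ),
      F x i = fRule15 (x (i - 1)) (x i) (x (i + 1)))
    (a b : ℤ) (x y : ℤ → Fin 3)
    (hxy : ∀ i : ℤ, a ≤ i → i ≤ b → x i = y i)
    (ha : ∀ n : ℕ, F^[n] x a = F^[n] y a)
    (hb : ∀ n : ℕ, F^[n] x b = F^[n] y b) :
    ∀ (n : ℕ) (i : ℤ), a ≤ i → i ≤ b → F^[n] x i = F^[n] y i := by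
  intro n
  induction n with
  | zero => simpa using hxy
  | succ n ih =>
    intro i hi1 hi2
    rcases eq_or_lt_of_le hi1 with h | h
    · rw [← h]; exact ha (n + 1)
    rcases eq_or_lt_of_le hi2 with h' | h'
    · rw [h']; exact hb (n + 1)
    rw [Function.iterate_succ_apply', Function.iterate_succ_apply', hF, hF,
      ih (i - 1) (by omega) (by omega), ih i (by omega) (by omega),
      ih (i + 1) (by omega) (by omega)]

/-- Modify a configuration to place blocking words `202` centered at `c` and `-c`. -/
def modify15 (x : ℤ → Fin 3) (c : ℤ) : ℤ → Fin 3 := fun i =>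
  if i = c - 1 ∨ i = -c + 1 then 2
  else if i = c ∨ i = -c then 0
  else if i = c + 1 ∨ i = -c - 1 then 2
  else x i

lemma modify15_spec (x : ℤ → Fin 3) (c : ℤ) (hc : 2 ≤ c) :
    modify15 x c (c - 1) = 2 ∧ modify15 x c c = 0 ∧ modify15 x c (c + 1) = 2 ∧
    modify15 x c (-c - 1) = 2 ∧ modify15 x c (-c) = 0 ∧ modify15 x c (-c + 1) = 2 ∧
    ∀ i : ℤ, |i| ≤ c - 2 → modify15 x c i = x i := by
  unfold modify15
  refine ⟨by rw [if_pos (Or.inl rfl)], ?_, ?_, ?_, ?_, by rw [if_pos (Or.inr rfl)], ?_⟩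
  · rw [if_neg (by omega), if_pos (Or.inl rfl)]
  · rw [if_neg (by omega), if_neg (by omega), if_pos (Or.inl rfl)]
  · rw [if_neg (by omega), if_neg (by omega), if_pos (Or.inr rfl)]
  · rw [if_neg (by omega), if_pos (Or.inr rfl)]
  · intro i hi
    rw [abs_le] at hi
    rw [if_neg (by omega), if_neg (by omega), if_neg (by omega)]

/-- For the CA `F` with local rule `fRule15` (radius 1), the word `202` is
`1`-blocking; consequently `F` is almost equicontinuous (its set of equicontinuity
points is residual). -/
theorem stmt_15
    (F : (ℤ → Fin 3) → (ℤ → Fin 3))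
    (hF : ∀ (x : ℤ → Fin 3) (i : ℤ),
      F x i = fRule15 (x (i - 1)) (x i) (x (i + 1))) :
    (∃ j : ℕ, j ≤ 2 ∧
      ∀ x y : ℤ → Fin 3,
        x 0 = 2 → x 1 = 0 → x 2 = 2 →
        y 0 = 2 → y 1 = 0 → y 2 = 2 →
        ∀ n : ℕ, F^[n] x (j : ℤ) = F^[n] y (j : ℤ)) ∧
    {x : ℤ → Fin 3 | ∀ m : ℕ, ∃ M : ℕ, ∀ y : ℤ → Fin 3,
      (∀ i : ℤ, |i| ≤ (M : ℤ) → x i = y i) →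
      ∀ (n : ℕ) (i : ℤ), |i| ≤ (m : ℤ) → F^[n] x i = F^[n] y i}
      ∈ residual (ℤ → Fin 3) := by
  constructor
  · -- blocking part
    refine ⟨1, by norm_num, fun x y hx0 hx1 hx2 hy0 hy1 hy2 n => ?_⟩
    have hx : F^[n] x 1 = 0 :=
      block15 hF 1 x (by norm_num [hx0]) hx1 (by norm_num [hx2]) n
    have hy : F^[n] y 1 = 0 :=
      block15 hF 1 y (by norm_num [hy0]) hy1 (by norm_num [hy2]) n
    rw [show ((1 : ℕ) : ℤ) = 1 by norm_num, hx, hy]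
  · -- residual part
    have hEq : {x : ℤ → Fin 3 | ∀ m : ℕ, ∃ M : ℕ, ∀ y : ℤ → Fin 3,
        (∀ i : ℤ, |i| ≤ (M : ℤ) → x i = y i) →
        ∀ (n : ℕ) (i : ℤ), |i| ≤ (m : ℤ) → F^[n] x i = F^[n] y i} =
        ⋂ m : ℕ, {x : ℤ → Fin 3 | ∃ M : ℕ, ∀ y : ℤ → Fin 3,
        (∀ i : ℤ, |i| ≤ (M : ℤ) → x i = y i) →
        ∀ (n : ℕ) (i : ℤ), |i| ≤ (m : ℤ) → F^[n] x i = F^[n] y i} := by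
      ext x; simp [Set.mem_iInter]
    rw [hEq]
    refine countable_iInter_mem.mpr fun m => residual_of_dense_open ?_ ?_
    · -- open
      rw [isOpen_iff_forall_mem_open]
      intro x ⟨M, hM⟩
      refine ⟨Set.pi (Set.Icc (-(M : ℤ)) M) (fun i => {x i}), ?_, ?_, ?_⟩
      · intro x' hx' 
        refine ⟨M, fun y hy n i hi => ?_⟩
        have hx'x : ∀ i : ℤ, |i| ≤ (M : ℤ) → x i = x' i := by
          intro i hi
          exact (hx' i (Set.mem_Icc.mpr (abs_le.mp hi))).symm
        have h1 := hM x' hx'x n i hi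
        have hyx : ∀ i : ℤ, |i| ≤ (M : ℤ) → x i = y i := by
          intro i hi
          rw [hx'x i hi]; exact hy i hi
        have h2 := hM y hyx n i hi
        rw [← h1, ← h2]
      · exact isOpen_set_pi (Set.finite_Icc _ _) (fun a _ => isOpen_discrete _)
      · intro i _; rfl
    · -- dense
      rw [dense_iff_inter_open]
      intro U hU ⟨x, hxU⟩
      obtain ⟨I, u, hu, hsub⟩ := isOpen_pi_iff.mp hU x hxU
      set K : ℕ := m + I.sup (fun i => i.natAbs) with hK
      have hIK : ∀ i ∈ I, |i| ≤ (K : ℤ) := by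
        intro i hi
        have : i.natAbs ≤ I.sup (fun i => i.natAbs) := Finset.le_sup hi
        have h2 : |i| = (i.natAbs : ℤ) := Int.abs_eq_natAbs i
        omega
      set c : ℤ := (K : ℤ) + 2 with hc
      obtain ⟨m1, m2, m3, m4, m5, m6, m7⟩ := modify15_spec x c (by omega)
      set y : ℤ → Fin 3 := modify15 x c with hy
      refine ⟨y, ?_, ?_⟩
      · apply hsub
        intro i hi
        have : y i = x i := m7 i (by have := hIK i hi; omega)
        rw [this]
        exact (hu i hi).2
      · refine ⟨K + 3, fun z hz n i hi => ?_⟩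
        have hM3 : ((K + 3 : ℕ) : ℤ) = c + 1 := by push_cast; omega
        rw [hM3] at hz
        -- z agrees with y at the blocking words
        have hz' : ∀ i : ℤ, -c - 1 ≤ i → i ≤ c + 1 → y i = z i := by
          intro i h1 h2
          exact hz i (by rw [abs_le]; omega)
        -- blocking at c and -c for both y and z
        have hyc : ∀ n : ℕ, F^[n] y c = 0 := block15 hF c y m1 m2 m3
        have hzc : ∀ n : ℕ, F^[n] z c = 0 :=
          block15 hF c z (by rw [← hz' _ (by omega) (by omega)]; exact m1)
            (by rw [← hz' _ (by omega) (by omega)]; exact m2)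
            (by rw [← hz' _ (by omega) (by omega)]; exact m3)
        have hyc' : ∀ n : ℕ, F^[n] y (-c) = 0 := by
          apply block15 hF (-c) y
          · rw [show -c - 1 = -c - 1 from rfl]; exact m4
          · exact m5
          · rw [show -c + 1 = -c + 1 from rfl]; exact m6
        have hzc' : ∀ n : ℕ, F^[n] z (-c) = 0 :=
          block15 hF (-c) z (by rw [← hz' _ (by omega) (by omega)]; exact m4)
            (by rw [← hz' _ (by omega) (by omega)]; exact m5)
            (by rw [← hz' _ (by omega) (by omega)]; exact m6)
        have := determ15 hF (-c) c y z
          (fun i h1 h2 => hz' i (by omega) (by omega))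
          (fun n => by rw [hyc' n, hzc' n]) (fun n => by rw [hyc n, hzc n]) n i
        rw [abs_le] at hi
        exact this (by omega) (by omega)
end
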